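/- arXiv:0801.3983 — 13 statements merged into one kernel-verified Lean document; each statement's English description precedes it below -/
import Mathlib

section
/- For any subset Ω of the symmetric group S_n, P(n,d) ≤ n! · P_Ω(n,d) / |Ω|, where P(n,d) is the maximum size of a set of permutations in S_n with pairwise Hamming distance at least d, and P_Ω(n,d) is the maximum size of such a set contained in Ω. -/
open Finset

/-- Hamming distance between two permutations of `Fin n`. -/
def permDist {n : ℕ} (x y : Equiv.Perm (Fin n)) : ℕ :=
  (Finset.univ.filter fun i => x i ≠ y i).card

/-- Weight of a permutation: number of non-fixed points. -/
def permWeight {n : ℕ} (x : Equiv.Perm (Fin n)) : ℕ :=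
  (Finset.univ.filter fun i => x i ≠ i).card

/-- `C` is an `(n,d)` permutation array: pairwise Hamming distance at least `d`. -/
def isPA {n : ℕ} (C : Finset (Equiv.Perm (Fin n))) (d : ℕ) : Prop :=
  ∀ x ∈ C, ∀ y ∈ C, x ≠ y → d ≤ permDist x y

/-- `P n d`: maximum size of an `(n,d)` permutation array. -/
noncomputable def P (n d : ℕ) : ℕ :=
  sSup {m | ∃ C : Finset (Equiv.Perm (Fin n)), isPA C d ∧ C.card = m}

/-- `Pw n d w`: maximum size of an `(n,d,w)` constant-weight permutation array. -/
noncomputable def Pw (n d w : ℕ) : ℕ :=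
  sSup {m | ∃ C : Finset (Equiv.Perm (Fin n)), isPA C d ∧ (∀ x ∈ C, permWeight x = w) ∧ C.card = m}

/-- `A n d w`: maximum size of a binary constant-weight code of length `n`,
minimum distance `d`, weight `w` (codewords as supports). -/
noncomputable def A (n d w : ℕ) : ℕ :=
  sSup {m | ∃ C : Finset (Finset (Fin n)), (∀ s ∈ C, s.card = w) ∧
    (∀ s ∈ C, ∀ t ∈ C, s ≠ t → d ≤ (symmDiff s t).card) ∧ C.card = m}

/-- Volume of a Hamming ball of radius `r` in `S_n`. -/
def V (n r : ℕ) : ℕ := ∑ i ∈ Finset.range (r + 1), n.choose i * numDerangements i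

/-- `POmega n d Ω`: maximum size of an `(n,d)` PA contained in `Ω`. -/
noncomputable def POmega (n d : ℕ) (Ω : Finset (Equiv.Perm (Fin n))) : ℕ :=
  sSup {m | ∃ C : Finset (Equiv.Perm (Fin n)), C ⊆ Ω ∧ isPA C d ∧ C.card = m}

lemma permDist_mul_left {n : ℕ} (σ x y : Equiv.Perm (Fin n)) :
    permDist (σ * x) (σ * y) = permDist x y := by
  unfold permDist
  congr 1
  apply Finset.filter_congr
  intro i _
  simp [Equiv.Perm.mul_apply, σ.injective.ne_iff]

theorem stmt0 (n d : ℕ) (Ω : Finset (Equiv.Perm (Fin n))) (hΩ : Ω.Nonempty) :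
    (P n d : ℚ) ≤ (Nat.factorial n : ℚ) * (POmega n d Ω : ℚ) / (Ω.card : ℚ) := by
  have hbdd : BddAbove {m | ∃ C : Finset (Equiv.Perm (Fin n)), isPA C d ∧ C.card = m} := by
    refine ⟨Fintype.card (Equiv.Perm (Fin n)), ?_⟩
    rintro m ⟨C, _, rfl⟩
    exact Finset.card_le_univ C
  have hbddΩ : BddAbove {m | ∃ C : Finset (Equiv.Perm (Fin n)), C ⊆ Ω ∧ isPA C d ∧ C.card = m} := by
    refine ⟨Fintype.card (Equiv.Perm (Fin n)), ?_⟩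
    rintro m ⟨C, _, _, rfl⟩
    exact Finset.card_le_univ C
  have hne : {m | ∃ C : Finset (Equiv.Perm (Fin n)), isPA C d ∧ C.card = m}.Nonempty :=
    ⟨0, ∅, fun x hx => absurd hx (Finset.notMem_empty x), Finset.card_empty⟩
  obtain ⟨C, hC, hCcard⟩ := Nat.sSup_mem hne hbdd
  -- For each σ, the translate D σ is a PA inside Ω
  set D : Equiv.Perm (Fin n) → Finset (Equiv.Perm (Fin n)) :=
    fun σ => Ω.filter (fun ω => σ * ω ∈ C) with hD
  have hDsub : ∀ σ, D σ ⊆ Ω := fun σ => Finset.filter_subset _ _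
  have hDPA : ∀ σ, isPA (D σ) d := by
    intro σ x hx y hy hxy
    simp only [hD, Finset.mem_filter] at hx hy
    have h1 : σ * x ≠ σ * y := fun h => hxy (mul_left_cancel h)
    have := hC (σ * x) hx.2 (σ * y) hy.2 h1
    rwa [permDist_mul_left] at this
  have hDle : ∀ σ, (D σ).card ≤ POmega n d Ω := fun σ =>
    le_csSup hbddΩ ⟨D σ, hDsub σ, hDPA σ, rfl⟩
  -- Double counting
  have hsum : ∑ σ : Equiv.Perm (Fin n), (D σ).card = Ω.card * C.card := by
    have : ∀ σ, (D σ).card = ∑ ω ∈ Ω, if σ * ω ∈ C then 1 else 0 := by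
      intro σ; exact Finset.card_filter _ _
    simp only [this]
    rw [Finset.sum_comm]
    have : ∀ ω : Equiv.Perm (Fin n),
        (∑ σ : Equiv.Perm (Fin n), if σ * ω ∈ C then 1 else 0) = C.card := by
      intro ω
      rw [← Finset.card_filter]
      apply Finset.card_bij (fun σ _ => σ * ω)
      · intro σ hσ; simpa using (Finset.mem_filter.mp hσ).2
      · intro a ha b hb h; exact mul_right_cancel h
      · intro c hc
        exact ⟨c * ω⁻¹, Finset.mem_filter.mpr ⟨Finset.mem_univ _, by simpa using hc⟩,
          by group⟩
    simp [this]
  have key : C.card * Ω.card ≤ Nat.factorial n * POmega n d Ω := by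
    calc C.card * Ω.card = Ω.card * C.card := Nat.mul_comm _ _
      _ = ∑ σ : Equiv.Perm (Fin n), (D σ).card := hsum.symm
      _ ≤ ∑ _σ : Equiv.Perm (Fin n), POmega n d Ω :=
          Finset.sum_le_sum (fun σ _ => hDle σ)
      _ = Fintype.card (Equiv.Perm (Fin n)) * POmega n d Ω := by
          rw [Finset.sum_const, Finset.card_univ, smul_eq_mul]
      _ = Nat.factorial n * POmega n d Ω := by
          rw [Fintype.card_perm, Fintype.card_fin]
  have hΩpos : (0 : ℚ) < (Ω.card : ℚ) := by
    exact_mod_cast hΩ.card_pos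
  rw [le_div_iff₀ hΩpos]
  have := hCcard ▸ key
  exact_mod_cast this
end

section
/- P(n,d) ≤ n!/(d-1)! (the Deza–Vanstone bound). -/
open Finset

lemma card_le_of_isPA {n d : ℕ} (hd : 1 ≤ d) (hn : d ≤ n)
    (C : Finset (Equiv.Perm (Fin n))) (hC : isPA C d) :
    C.card ≤ n.descFactorial (n - d + 1) := by
  have hk : n - d + 1 ≤ n := by omega
  set f : Equiv.Perm (Fin n) → (Fin (n - d + 1) ↪ Fin n) :=
    fun x => ⟨fun i => x (Fin.castLE hk i), fun a b hab => by
      have := x.injective hab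
      exact Fin.castLE_injective hk this⟩ with hf
  have hinj : Set.InjOn f C := by
    intro x hx y hy hxy
    by_contra hne
    have hfun : ∀ i : Fin (n - d + 1), x (Fin.castLE hk i) = y (Fin.castLE hk i) := by
      intro i
      exact congrFun (congrArg (fun e => e.toFun) hxy) i
    have hle : d ≤ permDist x y := hC x hx y hy hne
    -- agreements contain image of castLE
    have hsub : (Finset.univ.image (Fin.castLE hk)) ⊆
        Finset.univ.filter (fun i => x i = y i) := by
      intro i hi
      simp only [mem_image, mem_univ, true_and] at hi
      obtain ⟨j, rfl⟩ := hi
      simp [hfun j]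
    have hcard1 : n - d + 1 ≤ (Finset.univ.filter (fun i => x i = y i)).card := by
      calc n - d + 1 = (Finset.univ.image (Fin.castLE hk)).card := by
            rw [Finset.card_image_of_injective _ (Fin.castLE_injective hk)]
            simp
        _ ≤ _ := Finset.card_le_card hsub
    have hsplit : (Finset.univ.filter (fun i => x i = y i)).card + permDist x y = n := by
      have := Finset.card_filter_add_card_filter_not
        (s := (Finset.univ : Finset (Fin n))) (p := fun i => x i = y i)
      simpa [permDist] using this
    omega
  calc C.card ≤ Fintype.card (Fin (n - d + 1) ↪ Fin n) := by
        rw [← Finset.card_univ]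
        exact Finset.card_le_card_of_injOn f (fun _ _ => mem_univ _) hinj
    _ = n.descFactorial (n - d + 1) := by
        rw [Fintype.card_embedding_eq] ; simp

theorem stmt2 (n d : ℕ) (hd : 1 ≤ d) (hn : d ≤ n) :
    (P n d : ℚ) ≤ (Nat.factorial n : ℚ) / (Nat.factorial (d - 1) : ℚ) := by
  have hk : n - d + 1 ≤ n := by omega
  have hP : P n d ≤ n.descFactorial (n - d + 1) := by
    apply csSup_le
    · exact ⟨0, ∅, fun x hx => by simp at hx, by simp⟩
    · rintro m ⟨C, hC, rfl⟩
      exact card_le_of_isPA hd hn C hC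
  have hfac : (d - 1).factorial * n.descFactorial (n - d + 1) = n.factorial := by
    have := Nat.factorial_mul_descFactorial hk
    have h2 : n - (n - d + 1) = d - 1 := by omega
    rwa [h2] at this
  have heq : (n.descFactorial (n - d + 1) : ℚ) =
      (Nat.factorial n : ℚ) / (Nat.factorial (d - 1) : ℚ) := by
    rw [eq_div_iff (by positivity), mul_comm]
    exact_mod_cast hfac
  calc (P n d : ℚ) ≤ (n.descFactorial (n - d + 1) : ℚ) := by exact_mod_cast hP
    _ = _ := heq
end

section
/- P(n,d) ≤ n! · P(n,d,w) / (C(n,w)·D_w), where P(n,d,w) is the maximum size of an (n,d) permutation array all of whose elements have weight w. -/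
open Finset

open Equiv Function

-- number of permutations with given support set
lemma fiber_card_aux (n : ℕ) (s : Finset (Fin n)) :
    ((univ : Finset (Perm (Fin n))).filter
      (fun σ => (univ.filter fun i => σ i ≠ i) = s)).card = numDerangements s.card := by
  rw [← Fintype.card_coe s, ← card_derangements_eq_numDerangements, ← Fintype.card_subtype]
  refine Fintype.card_congr ?_
  refine Equiv.trans (Equiv.subtypeEquivRight ?_) (derangements.subtypeEquiv (fun a => a ∈ s)).symm
  intro σ
  simp only [Finset.ext_iff, Finset.mem_filter, Finset.mem_univ, true_and,
    Function.mem_fixedPoints, Function.IsFixedPt, ne_eq]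
  constructor <;> (intro h a; specialize h a; tauto)

lemma count_weight (n w : ℕ) :
    ((univ : Finset (Perm (Fin n))).filter fun σ => permWeight σ = w).card
      = n.choose w * numDerangements w := by
  have key : (univ : Finset (Perm (Fin n))).filter (fun σ => permWeight σ = w)
      = (Finset.powersetCard w (univ : Finset (Fin n))).biUnion
          (fun s => univ.filter fun σ => (univ.filter fun i => σ i ≠ i) = s) := by
    ext σ
    simp only [mem_filter, mem_univ, true_and, mem_biUnion, Finset.mem_powersetCard, permWeight]
    constructor
    · intro h; exact ⟨_, ⟨Finset.subset_univ _, (Finset.mem_filter.mp h).2⟩, rfl⟩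
    · rintro ⟨s, ⟨-, hs⟩, rfl⟩; exact Finset.mem_filter.mpr ⟨Finset.mem_univ _, hs⟩
  rw [key, Finset.card_biUnion]
  · have : ∀ s ∈ Finset.powersetCard w (univ : Finset (Fin n)),
        ((univ : Finset (Perm (Fin n))).filter
          (fun σ => (univ.filter fun i => σ i ≠ i) = s)).card = numDerangements w := by
      intro s hs
      rw [fiber_card_aux, (Finset.mem_powersetCard.mp hs).2]
    rw [Finset.sum_congr rfl this, Finset.sum_const, Finset.card_powersetCard, card_univ,
      Fintype.card_fin, smul_eq_mul]
  · intro s hs t ht hst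
    rw [Function.onFun, Finset.disjoint_left]
    intro σ h1 h2
    simp only [mem_filter] at h1 h2
    exact hst (h1.2 ▸ h2.2)

lemma permDist_mul_right {n : ℕ} (x y g : Perm (Fin n)) :
    permDist (x * g) (y * g) = permDist x y := by
  unfold permDist
  apply Finset.card_bij' (fun i _ => g i) (fun j _ => g⁻¹ j) <;>
    simp [Equiv.Perm.mul_apply]
  · intro a ha; exact (Finset.mem_filter.mp ha).2
  · intro a ha; exact Finset.mem_filter.mpr ⟨Finset.mem_univ _, by simpa using ha⟩


theorem stmt5 (n d w : ℕ) (hw : 0 < n.choose w * numDerangements w) :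
    (P n d : ℚ) ≤ (Nat.factorial n : ℚ) * (Pw n d w : ℚ) /
      ((n.choose w : ℚ) * (numDerangements w : ℚ)) := by
  set N := n.choose w * numDerangements w with hN
  -- the set defining P is nonempty and bounded above
  have hbddP : BddAbove {m | ∃ C : Finset (Perm (Fin n)), isPA C d ∧ C.card = m} := by
    refine ⟨Fintype.card (Perm (Fin n)), ?_⟩
    rintro m ⟨C, -, rfl⟩
    exact Finset.card_le_univ C
  have hne : ({m | ∃ C : Finset (Perm (Fin n)), isPA C d ∧ C.card = m}).Nonempty :=
    ⟨0, ∅, fun x hx => absurd hx (Finset.notMem_empty x), Finset.card_empty⟩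
  obtain ⟨C, hC, hCcard⟩ := Nat.sSup_mem hne hbddP
  have hbddPw : BddAbove {m | ∃ C : Finset (Perm (Fin n)),
      isPA C d ∧ (∀ x ∈ C, permWeight x = w) ∧ C.card = m} := by
    refine ⟨Fintype.card (Perm (Fin n)), ?_⟩
    rintro m ⟨C, -, -, rfl⟩
    exact Finset.card_le_univ C
  -- per-translate bound
  have hg : ∀ g : Perm (Fin n),
      (C.filter fun x => permWeight (x * g) = w).card ≤ Pw n d w := by
    intro g
    set D := ((C.image (· * g)).filter fun y => permWeight y = w) with hD
    have hcard : (C.filter fun x => permWeight (x * g) = w).card = D.card := by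
      rw [hD, Finset.filter_image,
        Finset.card_image_of_injective _ (mul_left_injective g)]
    rw [hcard]
    apply le_csSup hbddPw
    refine ⟨D, ?_, ?_, rfl⟩
    · intro a ha b hb hab
      simp only [hD, mem_filter, mem_image] at ha hb
      obtain ⟨⟨x, hx, rfl⟩, -⟩ := ha
      obtain ⟨⟨y, hy, rfl⟩, -⟩ := hb
      rw [permDist_mul_right]
      exact hC x hx y hy (fun h => hab (by rw [h]))
    · intro a ha
      exact (Finset.mem_filter.mp ha).2
  -- double counting
  have key : C.card * N ≤ n.factorial * Pw n d w := by
    have h1 : ∀ x : Perm (Fin n),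
        ((univ : Finset (Perm (Fin n))).filter fun g => permWeight (x * g) = w).card = N := by
      intro x
      rw [hN, ← count_weight n w]
      have : ((univ : Finset (Perm (Fin n))).filter fun g => permWeight (x * g) = w)
          = ((univ : Finset (Perm (Fin n))).filter fun h => permWeight h = w).image
              (fun h => x⁻¹ * h) := by
        ext g
        simp only [mem_filter, mem_univ, true_and, mem_image]
        constructor
        · intro h; exact ⟨x * g, h, by group⟩
        · rintro ⟨h, hh, rfl⟩; simpa [mul_assoc] using hh
      rw [this, Finset.card_image_of_injective _ (mul_right_injective x⁻¹)]
    calc C.card * N = ∑ x ∈ C,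
          ((univ : Finset (Perm (Fin n))).filter fun g => permWeight (x * g) = w).card := by
          rw [Finset.sum_congr rfl (fun x _ => h1 x), Finset.sum_const, smul_eq_mul]
      _ = ∑ g ∈ (univ : Finset (Perm (Fin n))),
          (C.filter fun x => permWeight (x * g) = w).card := by
          simp only [Finset.card_filter]
          exact Finset.sum_comm
      _ ≤ ∑ _g ∈ (univ : Finset (Perm (Fin n))), Pw n d w :=
          Finset.sum_le_sum (fun g _ => hg g)
      _ = n.factorial * Pw n d w := by
          rw [Finset.sum_const, smul_eq_mul, card_univ, Fintype.card_perm, Fintype.card_fin]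
  -- conclude over ℚ
  have hNQ : (0 : ℚ) < (n.choose w : ℚ) * (numDerangements w : ℚ) := by exact_mod_cast hw
  rw [le_div_iff₀ hNQ]
  have hP : P n d = C.card := by rw [P, ← hCcard]
  rw [hP]
  calc (C.card : ℚ) * ((n.choose w : ℚ) * (numDerangements w : ℚ))
      = ((C.card * N : ℕ) : ℚ) := by rw [hN]; push_cast; ring
    _ ≤ ((n.factorial * Pw n d w : ℕ) : ℚ) := by exact_mod_cast key
    _ = (n.factorial : ℚ) * (Pw n d w : ℚ) := by push_cast; ring
end

section
/- For d > w, P(n,d,w) ≤ A(n, 2d-2w, w), where A(n,d,w) is the maximum size of a binary constant-weight code of length n, minimum distance d, and weight w. -/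
open Finset

theorem stmt6 (n d w : ℕ) (h : w < d) :
    Pw n d w ≤ A n (2 * d - 2 * w) w := by
  unfold Pw A
  apply csSup_le_csSup
  · exact ⟨Fintype.card (Finset (Fin n)), fun m ⟨C, _, _, hc⟩ => hc ▸ Finset.card_le_univ C⟩
  · exact ⟨0, ∅, by simp [isPA]⟩
  · rintro m ⟨C, hPA, hwt, hcard⟩
    set f : Equiv.Perm (Fin n) → Finset (Fin n) :=
      fun x => Finset.univ.filter fun i => x i ≠ i with hf
    -- key: distance ≤ card of union of supports
    have hdist : ∀ x y : Equiv.Perm (Fin n), permDist x y ≤ (f x ∪ f y).card := by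
      intro x y
      apply Finset.card_le_card
      intro i hi
      simp only [permDist, hf, Finset.mem_filter, Finset.mem_union, Finset.mem_univ,
        true_and] at hi ⊢
      by_contra hcon
      push_neg at hcon
      exact hi (hcon.1.trans hcon.2.symm)
    have hinj : Set.InjOn f C := by
      intro x hx y hy hxy
      by_contra hne
      have h1 := hPA x hx y hy hne
      have h2 : permDist x y ≤ w := by
        have := hdist x y
        rw [hxy, Finset.union_self] at this
        exact this.trans_eq (hwt y hy)
      omega
    refine ⟨C.image f, ?_, ?_, ?_⟩
    · intro s hs
      obtain ⟨x, hx, rfl⟩ := Finset.mem_image.mp hs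
      exact hwt x hx
    · intro s hs t ht hst
      obtain ⟨x, hx, rfl⟩ := Finset.mem_image.mp hs
      obtain ⟨y, hy, rfl⟩ := Finset.mem_image.mp ht
      have hne : x ≠ y := fun e => hst (by rw [e])
      have h1 := hPA x hx y hy hne
      have h2 := hdist x y
      have h3 : (symmDiff (f x) (f y)).card + (f x ⊓ f y).card = (f x ⊔ f y).card := by
        rw [← Finset.card_union_of_disjoint (disjoint_symmDiff_inf (f x) (f y)),
          ← Finset.sup_eq_union, symmDiff_sup_inf]
      simp only [Finset.sup_eq_union, Finset.inf_eq_inter] at h3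
      have h4 : (f x ∪ f y).card + (f x ∩ f y).card = (f x).card + (f y).card :=
        Finset.card_union_add_card_inter _ _
      have h5 := hwt x hx
      have h6 := hwt y hy
      simp only [hf, permWeight] at *
      omega
    · rw [Finset.card_image_of_injOn hinj, hcard]
end

section
/- For 2 ≤ k ≤ ⌊n/2⌋, P(n,2k,k) = ⌊n/k⌋. -/
open Finset

def psupp {n : ℕ} (x : Equiv.Perm (Fin n)) : Finset (Fin n) :=
  Finset.univ.filter fun i => x i ≠ i

lemma permWeight_eq {n : ℕ} (x : Equiv.Perm (Fin n)) : permWeight x = (psupp x).card := rfl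

lemma disjoint_psupp {n k : ℕ} (x y : Equiv.Perm (Fin n)) (hx : permWeight x = k)
    (hy : permWeight y = k) (hd : 2 * k ≤ permDist x y) : Disjoint (psupp x) (psupp y) := by
  have hsub : (Finset.univ.filter fun i => x i ≠ y i) ⊆ psupp x ∪ psupp y := by
    intro i hi
    simp only [Finset.mem_filter, Finset.mem_univ, true_and] at hi
    simp only [psupp, Finset.mem_union, Finset.mem_filter, Finset.mem_univ, true_and]
    by_contra h
    push_neg at h
    rw [h.1, h.2] at hi; exact hi rfl
  have h1 : 2 * k ≤ (psupp x ∪ psupp y).card := le_trans hd (Finset.card_le_card hsub)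
  have h2 := Finset.card_union_add_card_inter (psupp x) (psupp y)
  have h3 := Finset.card_union_le (psupp x) (psupp y)
  rw [permWeight_eq] at hx hy
  rw [Finset.disjoint_iff_inter_eq_empty, ← Finset.card_eq_zero]
  omega

lemma dist_of_disjoint {n : ℕ} (x y : Equiv.Perm (Fin n)) (h : Disjoint (psupp x) (psupp y)) :
    permWeight x + permWeight y ≤ permDist x y := by
  rw [permWeight_eq, permWeight_eq, ← Finset.card_union_of_disjoint h]
  apply Finset.card_le_card
  intro i hi
  simp only [psupp, Finset.mem_union, Finset.mem_filter, Finset.mem_univ, true_and] at hi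
  simp only [Finset.mem_filter, Finset.mem_univ, true_and]
  rcases hi with h1 | h2
  · have h2 : i ∉ psupp y := Finset.disjoint_left.mp h (by simp [psupp, h1])
    simp only [psupp, Finset.mem_filter, Finset.mem_univ, true_and, not_not] at h2
    rw [h2]; exact h1
  · have h1 : i ∉ psupp x := Finset.disjoint_right.mp h (by simp [psupp, h2])
    simp only [psupp, Finset.mem_filter, Finset.mem_univ, true_and, not_not] at h1
    rw [h1]; exact fun e => h2 (e ▸ rfl)

lemma pa_upper {n k : ℕ} (hk : 0 < k) (C : Finset (Equiv.Perm (Fin n)))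
    (hPA : isPA C (2 * k)) (hw : ∀ x ∈ C, permWeight x = k) : C.card ≤ n / k := by
  have hdisj : ∀ x ∈ C, ∀ y ∈ C, x ≠ y → Disjoint (psupp x) (psupp y) := fun x hx y hy hxy =>
    disjoint_psupp x y (hw x hx) (hw y hy) (hPA x hx y hy hxy)
  have hcard : (C.biUnion psupp).card = C.card * k := by
    rw [Finset.card_biUnion hdisj]
    rw [Finset.sum_congr rfl fun x hx => by rw [← permWeight_eq, hw x hx]]
    simp [mul_comm]
  have hle : (C.biUnion psupp).card ≤ n := by
    calc (C.biUnion psupp).card ≤ (Finset.univ : Finset (Fin n)).card :=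
          Finset.card_le_card (Finset.subset_univ _)
      _ = n := Finset.card_fin n
  rw [Nat.le_div_iff_mul_le hk]
  omega

lemma exists_good {n k : ℕ} (hk : 2 ≤ k) (hkn : 2 * k ≤ n) :
    ∃ C : Finset (Equiv.Perm (Fin n)), isPA C (2 * k) ∧ (∀ x ∈ C, permWeight x = k) ∧
      C.card = n / k := by
  obtain ⟨n', rfl⟩ : ∃ n', n = n' + 1 := ⟨n - 1, by omega⟩
  set m := (n' + 1) / k with hm
  have hmk : m * k ≤ n' + 1 := by rw [hm, mul_comm]; exact Nat.mul_div_le _ _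
  -- the basic cycle (0 1 ... k-1)
  set r : Equiv.Perm (Fin (n' + 1)) := Fin.cycleRange ⟨k - 1, by omega⟩ with hrdef
  have hr : ∀ y : Fin (n' + 1), r y ≠ y ↔ (y : ℕ) < k := by
    intro y
    rcases lt_trichotomy y (⟨k - 1, by omega⟩ : Fin (n' + 1)) with h | h | h
    · rw [hrdef, Fin.cycleRange_of_lt h]
      have hy : (y : ℕ) < k - 1 := h
      have hv : ((y + 1 : Fin (n' + 1)) : ℕ) = (y : ℕ) + 1 := by
        apply Fin.val_add_one_of_lt
        rw [Fin.lt_def, Fin.val_last]; omega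
      constructor
      · intro _; omega
      · intro _ hc
        have := congrArg Fin.val hc
        omega
    · subst h
      rw [hrdef, Fin.cycleRange_self]
      constructor
      · intro _; simp; omega
      · intro _ hc
        have := congrArg Fin.val hc
        simp at this; omega
    · rw [hrdef, Fin.cycleRange_of_gt h]
      have hy : (k : ℕ) - 1 < (y : ℕ) := h
      constructor
      · intro hc; exact absurd rfl hc
      · intro hc; omega
  -- the translated cycles
  haveI : NeZero (n' + 1) := ⟨by omega⟩
  set c : ℕ → Fin (n' + 1) := fun j => ⟨j * k % (n' + 1), Nat.mod_lt _ (by omega)⟩ with hcdef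
  set g : ℕ → Equiv.Perm (Fin (n' + 1)) := fun j => (Equiv.addRight (c j)).permCongr r with hgdef
  have hcv : ∀ j < m, (c j : ℕ) = j * k := by
    intro j hj
    have : (j + 1) * k ≤ m * k := Nat.mul_le_mul_right _ (by omega)
    simp only [hcdef]
    exact Nat.mod_eq_of_lt (by nlinarith)
  have hjk : ∀ j < m, j * k + k ≤ n' + 1 := by
    intro j hj
    have : (j + 1) * k ≤ m * k := Nat.mul_le_mul_right _ (by omega)
    nlinarith
  have hg : ∀ j < m, ∀ x : Fin (n' + 1), g j x ≠ x ↔ j * k ≤ (x : ℕ) ∧ (x : ℕ) < j * k + k := by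
    intro j hj x
    have h1 : g j x = r (x - c j) + c j := by
      simp [hgdef, Equiv.permCongr_apply, ← sub_eq_add_neg]
    have h2 : g j x ≠ x ↔ r (x - c j) ≠ x - c j := by
      rw [h1]
      constructor
      · intro hne he; exact hne (by rw [he, sub_add_cancel])
      · intro hne he
        apply hne
        have := congrArg (fun z => z - c j) he
        simpa [sub_eq_add_neg] using this
    rw [h2, hr]
    -- now arithmetic on (x - c j).val
    have hsub : ((x - c j : Fin (n' + 1)) : ℕ) = (n' + 1 - j * k + (x : ℕ)) % (n' + 1) := by
      rw [Fin.sub_def]; rw [hcv j hj]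
    have hxlt : (x : ℕ) < n' + 1 := x.isLt
    have hjkn := hjk j hj
    rw [hsub]
    rcases le_or_gt (j * k) (x : ℕ) with hle | hlt
    · rw [show n' + 1 - j * k + (x : ℕ) = (n' + 1) + ((x : ℕ) - j * k) by omega,
        Nat.add_mod_left, Nat.mod_eq_of_lt (by omega)]
      omega
    · rw [Nat.mod_eq_of_lt (by omega)]
      omega
  have hsupp : ∀ j < m, psupp (g j) =
      Finset.univ.filter fun x : Fin (n' + 1) => j * k ≤ (x : ℕ) ∧ (x : ℕ) < j * k + k := by
    intro j hj
    apply Finset.filter_congr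
    intro x _
    exact hg j hj x
  have hwt : ∀ j < m, permWeight (g j) = k := by
    intro j hj
    have hcb : (Finset.univ.filter fun x : Fin (n' + 1) =>
        j * k ≤ (x : ℕ) ∧ (x : ℕ) < j * k + k).card = (Finset.range k).card := by
      refine Finset.card_bij (fun x _ => (x : ℕ) - j * k) ?_ ?_ ?_
      · intro a ha
        simp only [Finset.mem_filter, Finset.mem_univ, true_and] at ha
        simp only [Finset.mem_range]; omega
      · intro a ha b hb hab
        simp only [Finset.mem_filter, Finset.mem_univ, true_and] at ha hb
        apply Fin.ext; omega
      · intro b hb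
        simp only [Finset.mem_range] at hb
        have hjkn := hjk j hj
        refine ⟨⟨j * k + b, by omega⟩, ?_, by simp⟩
        simp only [Finset.mem_filter, Finset.mem_univ, true_and]
        constructor <;> simp <;> omega
    rw [permWeight_eq, hsupp j hj, hcb, Finset.card_range]
  have hdisj : ∀ i < m, ∀ j < m, i ≠ j → Disjoint (psupp (g i)) (psupp (g j)) := by
    intro i hi j hj hij
    rw [hsupp i hi, hsupp j hj, Finset.disjoint_left]
    intro x hx hx'
    simp only [Finset.mem_filter, Finset.mem_univ, true_and] at hx hx'
    rcases Nat.lt_or_ge i j with h | h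
    · have : (i + 1) * k ≤ j * k := Nat.mul_le_mul_right _ (by omega)
      nlinarith
    · have hij' : j < i := by omega
      have : (j + 1) * k ≤ i * k := Nat.mul_le_mul_right _ (by omega)
      nlinarith
  have hgne : ∀ i < m, ∀ j < m, i ≠ j → g i ≠ g j := by
    intro i hi j hj hij he
    set x0 : Fin (n' + 1) := ⟨i * k, by have := hjk i hi; omega⟩ with hx0
    have h1 : g i x0 ≠ x0 :=
      (hg i hi x0).mpr (by constructor <;> simp [hx0] <;> omega)
    have h2 : ¬ (g j x0 ≠ x0) := by
      rw [hg j hj]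
      rintro ⟨ha, hb⟩
      simp only [hx0] at ha hb
      rcases Nat.lt_or_ge i j with h | h
      · have : (i + 1) * k ≤ j * k := Nat.mul_le_mul_right _ (by omega)
        nlinarith
      · have : j < i := by omega
        have : (j + 1) * k ≤ i * k := Nat.mul_le_mul_right _ (by omega)
        nlinarith
    rw [he] at h1
    exact h2 h1
  refine ⟨(Finset.range m).image g, ?_, ?_, ?_⟩
  · intro x hx y hy hxy
    simp only [Finset.mem_image, Finset.mem_range] at hx hy
    obtain ⟨i, hi, rfl⟩ := hx
    obtain ⟨j, hj, rfl⟩ := hy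
    have hij : i ≠ j := fun h => hxy (by rw [h])
    have := dist_of_disjoint (g i) (g j) (hdisj i hi j hj hij)
    rw [hwt i hi, hwt j hj] at this
    omega
  · intro x hx
    simp only [Finset.mem_image, Finset.mem_range] at hx
    obtain ⟨j, hj, rfl⟩ := hx
    exact hwt j hj
  · rw [Finset.card_image_of_injOn, Finset.card_range]
    intro i hi j hj hij
    simp only [Finset.coe_range, Set.mem_Iio] at hi hj
    by_contra h
    exact hgne i hi j hj h hij

theorem stmt8 (n k : ℕ) (hk : 2 ≤ k) (hkn : k ≤ n / 2) :
    Pw n (2 * k) k = n / k := by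
  have h2k : 2 * k ≤ n := by omega
  obtain ⟨C, hPA, hw, hcard⟩ := exists_good hk h2k
  have hub : ∀ m ∈ {m | ∃ C : Finset (Equiv.Perm (Fin n)), isPA C (2 * k) ∧
      (∀ x ∈ C, permWeight x = k) ∧ C.card = m}, m ≤ n / k := by
    rintro m ⟨D, hD, hDw, rfl⟩
    exact pa_upper (by omega) D hD hDw
  have hmem : n / k ∈ {m | ∃ C : Finset (Equiv.Perm (Fin n)), isPA C (2 * k) ∧
      (∀ x ∈ C, permWeight x = k) ∧ C.card = m} := ⟨C, hPA, hw, hcard⟩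
  exact le_antisymm (csSup_le ⟨n / k, hmem⟩ hub) (le_csSup ⟨n / k, hub⟩ hmem)
end

section
/- For 1 ≤ k ≤ ⌊(n-1)/2⌋, P(n, 2k+1, k+1) = A(n, 2k, k+1). -/
open Finset

lemma permWeight_eq_support_card {n : ℕ} (x : Equiv.Perm (Fin n)) :
    permWeight x = x.support.card := rfl

lemma permDist_le_card_union {n : ℕ} (x y : Equiv.Perm (Fin n)) :
    permDist x y ≤ (x.support ∪ y.support).card := by
  apply Finset.card_le_card
  intro i hi
  simp only [permDist, mem_filter, mem_univ, true_and] at hi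
  simp only [mem_union, Equiv.Perm.mem_support]
  by_contra h
  push_neg at h
  exact hi (h.1.trans h.2.symm)

lemma card_symmDiff_finset {n : ℕ} (s t : Finset (Fin n)) :
    (symmDiff s t).card + 2 * (s ∩ t).card = s.card + t.card := by
  have h1 : symmDiff s t = (s ∪ t) \ (s ∩ t) := by
    rw [symmDiff_eq_sup_sdiff_inf]; rfl
  have h2 : (s ∩ t) ⊆ (s ∪ t) := (inter_subset_left).trans subset_union_left
  have h3 := Finset.card_sdiff_of_subset h2
  have h4 := Finset.card_union_add_card_inter s t
  have h5 : (s ∩ t).card ≤ (s ∪ t).card := Finset.card_le_card h2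
  rw [h1, h3]
  omega

theorem stmt9 (n k : ℕ) (hk : 1 ≤ k) (hkn : k ≤ (n - 1) / 2) :
    Pw n (2 * k + 1) (k + 1) = A n (2 * k) (k + 1) := by
  unfold Pw A
  congr 1
  ext m
  constructor
  · rintro ⟨C, hPA, hW, rfl⟩
    have hinj : Set.InjOn Equiv.Perm.support (C : Set (Equiv.Perm (Fin n))) := by
      intro x hx y hy hxy
      by_contra hne
      have hd := hPA x hx y hy hne
      have hle := permDist_le_card_union x y
      rw [hxy, union_self] at hle
      have hw : y.support.card = k + 1 := by
        rw [← permWeight_eq_support_card]; exact hW y hy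
      omega
    refine ⟨C.image Equiv.Perm.support, ?_, ?_, ?_⟩
    · intro s hs
      obtain ⟨x, hx, rfl⟩ := Finset.mem_image.mp hs
      rw [← permWeight_eq_support_card]; exact hW x hx
    · intro s hs t ht hst
      obtain ⟨x, hx, rfl⟩ := Finset.mem_image.mp hs
      obtain ⟨y, hy, rfl⟩ := Finset.mem_image.mp ht
      have hne : x ≠ y := fun h => hst (by rw [h])
      have hd := hPA x hx y hy hne
      have hle := permDist_le_card_union x y
      have hu := Finset.card_union_add_card_inter x.support y.support
      have hsd := card_symmDiff_finset x.support y.support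
      have hwx : x.support.card = k + 1 := by
        rw [← permWeight_eq_support_card]; exact hW x hx
      have hwy : y.support.card = k + 1 := by
        rw [← permWeight_eq_support_card]; exact hW y hy
      omega
    · exact Finset.card_image_of_injOn hinj
  · rintro ⟨D, hW, hDist, rfl⟩
    set f : Finset (Fin n) → Equiv.Perm (Fin n) := fun s => s.toList.formPerm with hf
    have hsupp : ∀ s ∈ D, (f s).support = s := by
      intro s hs
      have hl : s.toList.Nodup := s.nodup_toList
      have hne : ∀ x : Fin n, s.toList ≠ [x] := by
        intro x hx
        have : s.toList.length = 1 := by rw [hx]; rfl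
        rw [Finset.length_toList] at this
        have := hW s hs
        omega
      rw [hf]
      simp only
      rw [List.support_formPerm_of_nodup s.toList hl hne, Finset.toList_toFinset]
    have hinj : Set.InjOn f (D : Set (Finset (Fin n))) := by
      intro s hs t ht hst
      rw [← hsupp s hs, ← hsupp t ht, hst]
    refine ⟨D.image f, ?_, ?_, ?_⟩
    · intro x hx y hy hxy
      obtain ⟨s, hs, rfl⟩ := Finset.mem_image.mp hx
      obtain ⟨t, ht, rfl⟩ := Finset.mem_image.mp hy
      have hst : s ≠ t := fun h => hxy (by rw [h])
      have hd := hDist s hs t ht hst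
      have hsd := card_symmDiff_finset s t
      have hu := Finset.card_union_add_card_inter s t
      have hws := hW s hs
      have hwt := hW t ht
      have hint : (s ∩ t).card ≤ 1 := by omega
      -- every point of s ∪ t is a disagreement point
      have hsub : s ∪ t ⊆ Finset.univ.filter fun i => (f s) i ≠ (f t) i := by
        intro p hp
        simp only [mem_filter, mem_univ, true_and]
        have hps := hsupp s hs
        have hpt := hsupp t ht
        rcases Finset.mem_union.mp hp with hps' | hpt'
        · by_cases hpt'' : p ∈ t
          · -- p in intersection
            intro heq
            have hx1 : (f s) p ≠ p := by
              rw [← Equiv.Perm.mem_support, hps]; exact hps'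
            have hy1 : (f t) p ≠ p := by
              rw [← Equiv.Perm.mem_support, hpt]; exact hpt''
            have hx2 : (f s) p ∈ s := by
              have h := Equiv.Perm.apply_mem_support.mpr
                (show p ∈ (f s).support by rw [hps]; exact hps')
              rwa [hps] at h
            have hy2 : (f t) p ∈ t := by
              have h := Equiv.Perm.apply_mem_support.mpr
                (show p ∈ (f t).support by rw [hpt]; exact hpt'')
              rwa [hpt] at h
            have hmem : (f s) p ∈ s ∩ t := Finset.mem_inter.mpr ⟨hx2, heq ▸ hy2⟩
            have hpmem : p ∈ s ∩ t := Finset.mem_inter.mpr ⟨hps', hpt''⟩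
            have := Finset.card_le_one.mp hint _ hmem _ hpmem
            exact hx1 this
          · -- p ∈ s \ t
            have hx1 : (f s) p ≠ p := by
              rw [← Equiv.Perm.mem_support, hps]; exact hps'
            have hy1 : (f t) p = p := by
              by_contra h
              exact hpt'' (hpt ▸ Equiv.Perm.mem_support.mpr h)
            rw [hy1]; exact hx1
        · by_cases hps'' : p ∈ s
          · intro heq
            have hx1 : (f s) p ≠ p := by
              rw [← Equiv.Perm.mem_support, hps]; exact hps''
            have hx2 : (f s) p ∈ s := by
              have h := Equiv.Perm.apply_mem_support.mpr
                (show p ∈ (f s).support by rw [hps]; exact hps'')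
              rwa [hps] at h
            have hy2 : (f t) p ∈ t := by
              have h := Equiv.Perm.apply_mem_support.mpr
                (show p ∈ (f t).support by rw [hpt]; exact hpt')
              rwa [hpt] at h
            have hmem : (f s) p ∈ s ∩ t := Finset.mem_inter.mpr ⟨hx2, heq ▸ hy2⟩
            have hpmem : p ∈ s ∩ t := Finset.mem_inter.mpr ⟨hps'', hpt'⟩
            have := Finset.card_le_one.mp hint _ hmem _ hpmem
            exact hx1 this
          · have hy1 : (f t) p ≠ p := by
              rw [← Equiv.Perm.mem_support, hpt]; exact hpt'
            have hx1 : (f s) p = p := by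
              by_contra h
              exact hps'' (hps ▸ Equiv.Perm.mem_support.mpr h)
            rw [hx1]; exact fun h => hy1 h.symm
      have hcard := Finset.card_le_card hsub
      have : 2 * k + 1 ≤ (s ∪ t).card := by omega
      calc 2 * k + 1 ≤ (s ∪ t).card := this
        _ ≤ _ := hcard
    · intro x hx
      obtain ⟨s, hs, rfl⟩ := Finset.mem_image.mp hx
      rw [permWeight_eq_support_card, hsupp s hs]
      exact hW s hs
    · exact Finset.card_image_of_injOn hinj
end

section
/- For n ≥ 4, P(n,4,3) ≤ 2·C(n,2)/3, i.e., 3·P(n,4,3) ≤ n(n-1). -/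
open Finset

/-- The edge set of a permutation: pairs (i, x i) with i not fixed. -/
noncomputable def permEdges {n : ℕ} (x : Equiv.Perm (Fin n)) : Finset (Fin n × Fin n) :=
  (Finset.univ.filter fun i => x i ≠ i).image (fun i => (i, x i))

lemma permEdges_card {n : ℕ} (x : Equiv.Perm (Fin n)) : (permEdges x).card = permWeight x := by
  rw [permEdges, permWeight, Finset.card_image_of_injOn]
  intro a _ b _ h
  exact (Prod.mk.injEq _ _ _ _ ▸ h).1

lemma shared_edge_dist {n : ℕ} (x y : Equiv.Perm (Fin n))
    (hx : permWeight x = 3) (hy : permWeight y = 3)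
    (i : Fin n) (hxi : x i ≠ i) (hyi : y i ≠ i) (hxy : x i = y i) :
    permDist x y ≤ 3 := by
  classical
  set Sx := Finset.univ.filter fun a => x a ≠ a with hSx
  set Sy := Finset.univ.filter fun a => y a ≠ a with hSy
  have hji : x i ≠ i := hxi
  -- i and x i belong to both supports
  have hiSx : i ∈ Sx := by simp [hSx, hxi]
  have hiSy : i ∈ Sy := by simp [hSy, hyi]
  have hjSx : x i ∈ Sx := by
    simp only [hSx, Finset.mem_filter, Finset.mem_univ, true_and]
    intro h
    exact hxi (x.injective h)
  have hjSy : x i ∈ Sy := by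
    simp only [hSy, Finset.mem_filter, Finset.mem_univ, true_and]
    intro h
    rw [hxy] at h
    exact hyi (y.injective h)
  have hpair : ({i, x i} : Finset (Fin n)) ⊆ Sx ∩ Sy := by
    intro a ha
    simp only [Finset.mem_insert, Finset.mem_singleton] at ha
    rcases ha with rfl | rfl
    · exact Finset.mem_inter.2 ⟨hiSx, hiSy⟩
    · exact Finset.mem_inter.2 ⟨hjSx, hjSy⟩
  have hpaircard : ({i, x i} : Finset (Fin n)).card = 2 := by
    rw [Finset.card_insert_of_notMem (by simpa using (Ne.symm hxi)), Finset.card_singleton]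
  have hinter : 2 ≤ (Sx ∩ Sy).card := hpaircard ▸ Finset.card_le_card hpair
  have hunion : (Sx ∪ Sy).card ≤ 4 := by
    have := Finset.card_union_add_card_inter Sx Sy
    have hx' : Sx.card = 3 := hx
    have hy' : Sy.card = 3 := hy
    omega
  -- disagreement set is contained in (Sx ∪ Sy) \ {i}
  have hsub : (Finset.univ.filter fun a => x a ≠ y a) ⊆ (Sx ∪ Sy) \ {i} := by
    intro a ha
    simp only [Finset.mem_filter, Finset.mem_univ, true_and] at ha
    rw [Finset.mem_sdiff, Finset.mem_union]
    constructor
    · simp only [hSx, hSy, Finset.mem_filter, Finset.mem_univ, true_and]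
      by_contra h
      push_neg at h
      obtain ⟨h1, h2⟩ := h
      exact ha (h1.trans h2.symm)
    · simp only [Finset.mem_singleton]
      rintro rfl
      exact ha hxy
  have hi_in : i ∈ Sx ∪ Sy := Finset.mem_union_left _ hiSx
  have hcard : ((Sx ∪ Sy) \ {i}).card ≤ 3 := by
    rw [Finset.card_sdiff_of_subset (by simpa using hi_in)]
    simp only [Finset.card_singleton]
    omega
  exact le_trans (Finset.card_le_card hsub) hcard

lemma pa_bound {n : ℕ} (C : Finset (Equiv.Perm (Fin n))) (hPA : isPA C 4)
    (hw : ∀ x ∈ C, permWeight x = 3) : 3 * C.card ≤ n * (n - 1) := by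
  classical
  have hdisj : ∀ x ∈ C, ∀ y ∈ C, x ≠ y → Disjoint (permEdges x) (permEdges y) := by
    intro x hx y hy hxy
    rw [Finset.disjoint_left]
    rintro ⟨i, j⟩ hix hiy
    simp only [permEdges, Finset.mem_image, Finset.mem_filter, Finset.mem_univ, true_and] at hix hiy
    obtain ⟨a, ha, ha2⟩ := hix
    obtain ⟨b, hb, hb2⟩ := hiy
    obtain ⟨rfl, rfl⟩ := Prod.mk.injEq .. ▸ ha2
    have hbi : b = a := (Prod.mk.injEq .. ▸ hb2).1
    subst hbi
    have hyb : y b = x b := (Prod.mk.injEq .. ▸ hb2).2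
    have := shared_edge_dist x y (hw x hx) (hw y hy) b ha hb hyb.symm
    have := hPA x hx y hy hxy
    omega
  have hsub : C.biUnion permEdges ⊆ Finset.univ.offDiag := by
    intro p hp
    simp only [Finset.mem_biUnion] at hp
    obtain ⟨x, hx, hpx⟩ := hp
    simp only [permEdges, Finset.mem_image, Finset.mem_filter, Finset.mem_univ, true_and] at hpx
    obtain ⟨a, ha, rfl⟩ := hpx
    exact Finset.mem_offDiag.2 ⟨Finset.mem_univ _, Finset.mem_univ _, Ne.symm ha⟩
  have hcount : (C.biUnion permEdges).card = 3 * C.card := by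
    rw [Finset.card_biUnion hdisj]
    rw [Finset.sum_congr rfl (fun x hx => (permEdges_card x).trans (hw x hx))]
    simp [mul_comm]
  have hoff : (Finset.univ.offDiag : Finset (Fin n × Fin n)).card = n * (n - 1) := by
    rw [Finset.offDiag_card]
    simp only [Finset.card_univ, Fintype.card_fin]
    cases n with
    | zero => simp
    | succ m => simp [Nat.succ_sub_one, Nat.mul_succ]
  calc 3 * C.card = (C.biUnion permEdges).card := hcount.symm
    _ ≤ (Finset.univ.offDiag : Finset (Fin n × Fin n)).card := Finset.card_le_card hsub
    _ = n * (n - 1) := hoff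

theorem stmt10 (n : ℕ) (hn : 4 ≤ n) :
    3 * Pw n 4 3 ≤ n * (n - 1) := by
  classical
  set S := {m | ∃ C : Finset (Equiv.Perm (Fin n)), isPA C 4 ∧ (∀ x ∈ C, permWeight x = 3) ∧ C.card = m} with hS
  have key : ∀ m ∈ S, 3 * m ≤ n * (n - 1) := by
    rintro m ⟨C, hPA, hw, rfl⟩
    exact pa_bound C hPA hw
  have hne : 0 ∈ S := ⟨∅, by intro x hx; simp at hx, by simp, by simp⟩
  have hbdd : BddAbove S := ⟨n * (n - 1), fun m hm => le_trans (Nat.le_mul_of_pos_left m (by norm_num)) (key m hm)⟩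
  have hmem : sSup S ∈ S := Nat.sSup_mem ⟨0, hne⟩ hbdd
  exact key _ hmem
end

section
/- If C is a set of weight-3 permutations in S_n with pairwise Hamming distance at least 4, then for any two distinct indices i, j ∈ {0,...,n-1}, at most 2 elements of C have both i and j in their support. -/
open Finset

lemma keyA {n : ℕ} (x : Equiv.Perm (Fin n)) (i j : Fin n) (hij : i ≠ j)
    (hw : permWeight x = 3) (hi : x i ≠ i) (hj : x j ≠ j) :
    x i = j ∨ x j = i := by
  by_contra h
  push_neg at h
  obtain ⟨h1, h2⟩ := h
  set S := Finset.univ.filter fun p => x p ≠ p with hS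
  have hiS : i ∈ S := by simp [hS, hi]
  have hjS : j ∈ S := by simp [hS, hj]
  have hxiS : x i ∈ S := by
    simp only [hS, Finset.mem_filter, Finset.mem_univ, true_and]
    intro h'
    exact hi (x.injective h')
  have hxjS : x j ∈ S := by
    simp only [hS, Finset.mem_filter, Finset.mem_univ, true_and]
    intro h'
    exact hj (x.injective h')
  have hxixj : x i ≠ x j := fun h' => hij (x.injective h')
  have hsub : ({i, j, x i, x j} : Finset (Fin n)) ⊆ S := by
    intro p hp
    simp only [Finset.mem_insert, Finset.mem_singleton] at hp
    rcases hp with rfl | rfl | rfl | rfl <;> assumption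
  have n1 : x i ∉ ({x j} : Finset (Fin n)) := by simp [hxixj]
  have n2 : j ∉ ({x i, x j} : Finset (Fin n)) := by
    simp only [Finset.mem_insert, Finset.mem_singleton]
    push_neg
    exact ⟨fun h' => h1 h'.symm, fun h' => hj h'.symm⟩
  have n3 : i ∉ ({j, x i, x j} : Finset (Fin n)) := by
    simp only [Finset.mem_insert, Finset.mem_singleton]
    push_neg
    exact ⟨hij, fun h' => hi h'.symm, fun h' => h2 h'.symm⟩
  have hcard : ({i, j, x i, x j} : Finset (Fin n)).card = 4 := by
    rw [Finset.card_insert_of_notMem n3, Finset.card_insert_of_notMem n2,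
      Finset.card_insert_of_notMem n1, Finset.card_singleton]
  have h4 := Finset.card_le_card hsub
  rw [hcard] at h4
  have hw3 : S.card = 3 := hw
  omega

lemma keyB {n : ℕ} (C : Finset (Equiv.Perm (Fin n))) (hw : ∀ x ∈ C, permWeight x = 3)
    (hC : isPA C 4) (x y : Equiv.Perm (Fin n)) (hx : x ∈ C) (hy : y ∈ C) (hxy : x ≠ y)
    (i j k : Fin n) (hij : i ≠ j) (hk : k = i ∨ k = j)
    (hxi : x i ≠ i) (hxj : x j ≠ j) (hyi : y i ≠ i) (hyj : y j ≠ j)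
    (heq : x k = y k) : False := by
  set Sx := Finset.univ.filter fun p => x p ≠ p with hSx
  set Sy := Finset.univ.filter fun p => y p ≠ p with hSy
  set D := Finset.univ.filter fun p => x p ≠ y p with hD
  have hDsub : D ⊆ (Sx ∪ Sy).erase k := by
    intro p hp
    simp only [hD, Finset.mem_filter, Finset.mem_univ, true_and] at hp
    rw [Finset.mem_erase, Finset.mem_union]
    constructor
    · rintro rfl; exact hp heq
    · simp only [hSx, hSy, Finset.mem_filter, Finset.mem_univ, true_and]
      by_contra h
      push_neg at h
      exact hp (h.1.trans h.2.symm)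
  have hinter : ({i, j} : Finset (Fin n)) ⊆ Sx ∩ Sy := by
    intro p hp
    simp only [Finset.mem_insert, Finset.mem_singleton] at hp
    rcases hp with rfl | rfl <;>
      simp [hSx, hSy, Finset.mem_inter, *]
  have hic : ({i, j} : Finset (Fin n)).card = 2 := by
    rw [Finset.card_insert_of_notMem (by simp [hij]), Finset.card_singleton]
  have h2 : 2 ≤ (Sx ∩ Sy).card := by
    rw [← hic]; exact Finset.card_le_card hinter
  have hx3 : Sx.card = 3 := hw x hx
  have hy3 : Sy.card = 3 := hw y hy
  have hu : (Sx ∪ Sy).card ≤ 4 := by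
    have := Finset.card_union_add_card_inter Sx Sy
    omega
  have hkU : k ∈ Sx ∪ Sy := by
    rcases hk with rfl | rfl <;> simp [hSx, Finset.mem_union, *]
  have hD3 : D.card ≤ 3 := by
    have := Finset.card_le_card hDsub
    rw [Finset.card_erase_of_mem hkU] at this
    omega
  have hD4 : 4 ≤ D.card := hC x hx y hy hxy
  omega

theorem stmt11 (n : ℕ) (C : Finset (Equiv.Perm (Fin n)))
    (hw : ∀ x ∈ C, permWeight x = 3) (hC : isPA C 4)
    (i j : Fin n) (hij : i ≠ j) :
    (C.filter fun x => x i ≠ i ∧ x j ≠ j).card ≤ 2 := by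
  by_contra h
  push_neg at h
  obtain ⟨x, y, z, hx, hy, hz, hxy, hxz, hyz⟩ := Finset.two_lt_card_iff.mp h
  simp only [Finset.mem_filter] at hx hy hz
  obtain ⟨hxC, hxi, hxj⟩ := hx
  obtain ⟨hyC, hyi, hyj⟩ := hy
  obtain ⟨hzC, hzi, hzj⟩ := hz
  have ax := keyA x i j hij (hw x hxC) hxi hxj
  have ay := keyA y i j hij (hw y hyC) hyi hyj
  have az := keyA z i j hij (hw z hzC) hzi hzj
  rcases ax with ax | ax <;> rcases ay with ay | ay <;> rcases az with az | az
  · exact keyB C hw hC x y hxC hyC hxy i j i hij (Or.inl rfl) hxi hxj hyi hyj (ax.trans ay.symm)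
  · exact keyB C hw hC x y hxC hyC hxy i j i hij (Or.inl rfl) hxi hxj hyi hyj (ax.trans ay.symm)
  · exact keyB C hw hC x z hxC hzC hxz i j i hij (Or.inl rfl) hxi hxj hzi hzj (ax.trans az.symm)
  · exact keyB C hw hC y z hyC hzC hyz i j j hij (Or.inr rfl) hyi hyj hzi hzj (ay.trans az.symm)
  · exact keyB C hw hC y z hyC hzC hyz i j i hij (Or.inl rfl) hyi hyj hzi hzj (ay.trans az.symm)
  · exact keyB C hw hC x z hxC hzC hxz i j j hij (Or.inr rfl) hxi hxj hzi hzj (ax.trans az.symm)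
  · exact keyB C hw hC x y hxC hyC hxy i j j hij (Or.inr rfl) hxi hxj hyi hyj (ax.trans ay.symm)
  · exact keyB C hw hC x y hxC hyC hxy i j j hij (Or.inr rfl) hxi hxj hyi hyj (ax.trans ay.symm)
end

section
/- For 2 ≤ k ≤ ⌊n/2⌋, P(n,2k) ≤ n! / ( V(n,k-1) + C(n,k)·D_k / ⌊n/k⌋ ). -/
open Finset

section Aux
open Equiv Equiv.Perm

lemma aux_support_ofSubtype {n : ℕ} (s : Finset (Fin n)) (f : Perm {a // a ∈ s})
    (hf : ∀ a, f a ≠ a) :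
    (Finset.univ.filter fun j => Equiv.Perm.ofSubtype f j ≠ j) = s := by
  ext j
  simp only [mem_filter, mem_univ, true_and]
  by_cases hj : j ∈ s
  · simp only [hj, iff_true]
    rw [Equiv.Perm.ofSubtype_apply_of_mem f hj]
    intro h
    exact hf ⟨j, hj⟩ (Subtype.ext h)
  · simp [Equiv.Perm.ofSubtype_apply_of_not_mem f hj, hj]

lemma aux_card_der {n : ℕ} (s : Finset (Fin n)) :
    (Finset.univ.filter fun f : Perm {a // a ∈ s} => ∀ a, f a ≠ a).card
      = numDerangements s.card := by
  rw [← Fintype.card_coe s, ← card_derangements_eq_numDerangements]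
  rw [← Fintype.card_subtype]
  rfl

/-- lower bound on number of permutations of weight exactly i -/
lemma aux_card_weight {n i : ℕ} :
    n.choose i * numDerangements i ≤
      (Finset.univ.filter fun σ : Perm (Fin n) => permWeight σ = i).card := by

  set F : Finset (Fin n) → Finset (Perm (Fin n)) := fun s =>
    (Finset.univ.filter fun f : Perm {a // a ∈ s} => ∀ a, f a ≠ a).image Equiv.Perm.ofSubtype
    with hF
  have hsub : ∀ s ∈ Finset.univ.powersetCard i, F s ⊆
      Finset.univ.filter fun σ : Perm (Fin n) => permWeight σ = i := by
    intro s hs σ hσ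
    simp only [hF, mem_image, mem_filter, mem_univ, true_and] at hσ
    obtain ⟨f, hf, rfl⟩ := hσ
    simp only [mem_filter, mem_univ, true_and]
    rw [permWeight, aux_support_ofSubtype s f hf]
    exact (Finset.mem_powersetCard.mp hs).2
  have hdisj : ((Finset.univ.powersetCard i : Finset (Finset (Fin n))) : Set (Finset (Fin n))).PairwiseDisjoint F := by
    intro s hs t ht hst
    simp only [Finset.disjoint_left]
    intro σ hσs hσt
    apply hst
    simp only [hF, mem_image, mem_filter, mem_univ, true_and] at hσs hσt
    obtain ⟨f, hf, hfs⟩ := hσs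
    obtain ⟨g, hg, hgt⟩ := hσt
    rw [← aux_support_ofSubtype s f hf, ← aux_support_ofSubtype t g hg, hfs, hgt]
  have hcardF : ∀ s ∈ Finset.univ.powersetCard i, (F s).card = numDerangements i := by
    intro s hs
    have hinj : Set.InjOn (fun f : Perm {a // a ∈ s} => (Equiv.Perm.ofSubtype f : Perm (Fin n)))
        ↑(Finset.univ.filter fun f : Perm {a // a ∈ s} => ∀ a, f a ≠ a) := by
      intro f hf g hg h
      ext a
      have := congrArg (fun σ : Perm (Fin n) => σ (a : Fin n)) h
      simp only [Equiv.Perm.ofSubtype_apply_coe] at this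
      exact congrArg Fin.val this
    rw [hF, Finset.card_image_of_injOn hinj, aux_card_der,
      (Finset.mem_powersetCard.mp hs).2]
  calc n.choose i * numDerangements i
      = ∑ _s ∈ (Finset.univ : Finset (Fin n)).powersetCard i, numDerangements i := by
        simp [Finset.card_powersetCard, mul_comm]
    _ = ∑ s ∈ Finset.univ.powersetCard i, (F s).card := by
        exact Finset.sum_congr rfl fun s hs => (hcardF s hs).symm
    _ = ((Finset.univ.powersetCard i).biUnion F).card := (Finset.card_biUnion hdisj).symm
    _ ≤ _ := Finset.card_le_card (Finset.biUnion_subset.mpr hsub)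

lemma aux_permDist_eq_weight {n : ℕ} (x σ : Perm (Fin n)) :
    permDist x (x * σ) = permWeight σ := by
  unfold permDist permWeight
  congr 1
  apply Finset.filter_congr
  intro i _
  exact not_congr ((Equiv.apply_eq_iff_eq x).trans eq_comm)

lemma aux_translate {n : ℕ} (x : Perm (Fin n)) (p : ℕ → Prop) [DecidablePred p] :
    (Finset.univ.filter fun z : Perm (Fin n) => p (permDist x z)).card
      = (Finset.univ.filter fun σ : Perm (Fin n) => p (permWeight σ)).card := by
  apply Finset.card_nbij' (i := fun z => x⁻¹ * z) (j := fun σ => x * σ)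
  · intro z hz
    simp only [mem_coe, mem_filter, mem_univ, true_and] at *
    have : permDist x z = permWeight (x⁻¹ * z) := by
      have := aux_permDist_eq_weight x (x⁻¹ * z)
      rwa [mul_inv_cancel_left] at this
    rwa [← this]
  · intro σ hσ
    simp only [mem_coe, mem_filter, mem_univ, true_and] at *
    rwa [aux_permDist_eq_weight]
  · intro z _; simp [mul_inv_cancel_left]
  · intro σ _; simp [inv_mul_cancel_left]

lemma aux_permDist_comm {n : ℕ} (x y : Perm (Fin n)) : permDist x y = permDist y x := by
  unfold permDist
  congr 1
  apply Finset.filter_congr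
  intro i _
  exact ne_comm

lemma aux_permDist_triangle {n : ℕ} (x y z : Perm (Fin n)) :
    permDist x z ≤ permDist x y + permDist y z := by
  unfold permDist
  calc (Finset.univ.filter fun i => x i ≠ z i).card
      ≤ ((Finset.univ.filter fun i => x i ≠ y i) ∪ (Finset.univ.filter fun i => y i ≠ z i)).card := by
        apply Finset.card_le_card
        intro i hi
        simp only [mem_filter, mem_union, mem_univ, true_and] at *
        by_contra hc
        push_neg at hc
        exact hi (hc.1.trans hc.2)
    _ ≤ _ := Finset.card_union_le _ _

lemma aux_card_wle {n r : ℕ} :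
    V n r ≤ (Finset.univ.filter fun σ : Perm (Fin n) => permWeight σ ≤ r).card := by
  have hdisj : ((Finset.range (r+1)) : Set ℕ).PairwiseDisjoint
      (fun i => Finset.univ.filter fun σ : Perm (Fin n) => permWeight σ = i) := by
    intro a _ b _ hab
    simp only [Finset.disjoint_left, mem_filter, mem_univ, true_and]
    rintro σ rfl h
    exact hab h
  calc V n r ≤ ∑ i ∈ Finset.range (r+1),
        (Finset.univ.filter fun σ : Perm (Fin n) => permWeight σ = i).card :=
      Finset.sum_le_sum fun i _ => aux_card_weight
    _ = ((Finset.range (r+1)).biUnion fun i =>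
        Finset.univ.filter fun σ : Perm (Fin n) => permWeight σ = i).card :=
      (Finset.card_biUnion hdisj).symm
    _ ≤ _ := by
      apply Finset.card_le_card
      intro σ hσ
      simp only [Finset.mem_biUnion, mem_filter, mem_univ, true_and, Finset.mem_range] at *
      obtain ⟨i, hi, hw⟩ := hσ
      omega

lemma aux_card_sphere {n k : ℕ} (x : Perm (Fin n)) :
    n.choose k * numDerangements k ≤
      (Finset.univ.filter fun z => permDist x z = k).card := by
  rw [aux_translate x (· = k)]
  exact aux_card_weight

lemma aux_card_ball {n r : ℕ} (x : Perm (Fin n)) :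
    V n r ≤ (Finset.univ.filter fun z => permDist x z ≤ r).card := by
  rw [aux_translate x (· ≤ r)]
  exact aux_card_wle

lemma aux_sphere_count {n k : ℕ} (hk : 0 < k) (C : Finset (Perm (Fin n)))
    (hC : isPA C (2*k)) (z : Perm (Fin n)) :
    (C.filter fun x => permDist x z = k).card ≤ n / k := by
  set F := C.filter fun x => permDist x z = k with hF
  set D : Perm (Fin n) → Finset (Fin n) :=
    (fun x => Finset.univ.filter fun i => x i ≠ z i) with hD
  have hcardD : ∀ x ∈ F, (D x).card = k := by
    intro x hx
    exact (Finset.mem_filter.mp hx).2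
  have hdisj : (F : Set (Perm (Fin n))).PairwiseDisjoint D := by
    intro a ha b hb hab
    simp only [Finset.mem_coe] at ha hb
    have hd := hC a (Finset.mem_filter.mp ha).1 b (Finset.mem_filter.mp hb).1 hab
    have hsub : (Finset.univ.filter fun i => a i ≠ b i) ⊆ D a ∪ D b := by
      intro i hi
      simp only [hD, mem_filter, Finset.mem_union, mem_univ, true_and] at *
      by_contra hc
      push_neg at hc
      exact hi (hc.1.trans hc.2.symm)
    have h1 : permDist a b ≤ (D a ∪ D b).card := Finset.card_le_card hsub
    have h2 : (D a ∪ D b).card + (D a ∩ D b).card = (D a).card + (D b).card :=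
      Finset.card_union_add_card_inter _ _
    have h3 : (D a ∩ D b).card = 0 := by
      have := hcardD a ha
      have := hcardD b hb
      omega
    show _root_.Disjoint (D a) (D b)
    rw [Finset.disjoint_iff_inter_eq_empty]
    exact Finset.card_eq_zero.mp h3
  have h1 : F.card * k ≤ n := by
    calc F.card * k = ∑ x ∈ F, (D x).card := by
          rw [Finset.sum_congr rfl hcardD, Finset.sum_const, smul_eq_mul]
      _ = (F.biUnion D).card := (Finset.card_biUnion hdisj).symm
      _ ≤ (Finset.univ : Finset (Fin n)).card := Finset.card_le_card (Finset.subset_univ _)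
      _ = n := by simp
  exact (Nat.le_div_iff_mul_le hk).mpr h1

lemma aux_main {n k : ℕ} (hk : 0 < k) (C : Finset (Perm (Fin n))) (hC : isPA C (2*k)) :
    C.card * ((n/k) * V n (k-1) + n.choose k * numDerangements k) ≤ (n/k) * n.factorial := by
  set m := n / k with hm
  have hz : ∀ z : Perm (Fin n), ∑ x ∈ C,
      (m * (if permDist x z ≤ k-1 then 1 else 0) + if permDist x z = k then 1 else 0) ≤ m := by
    intro z
    by_cases hex : ∃ x0 ∈ C, permDist x0 z ≤ k - 1
    · obtain ⟨x0, hx0, hd0⟩ := hex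
      have hzero : ∀ b ∈ C, b ≠ x0 →
          (m * (if permDist b z ≤ k-1 then 1 else 0) + if permDist b z = k then 1 else 0) = 0 := by
        intro b hb hbx0
        have htr := aux_permDist_triangle b z x0
        have h2k := hC b hb x0 hx0 hbx0
        have hcm := aux_permDist_comm z x0
        have h1 : ¬ permDist b z ≤ k - 1 := by omega
        have h2 : ¬ permDist b z = k := by omega
        simp [h1, h2]
      rw [Finset.sum_eq_single_of_mem x0 hx0 hzero]
      have hne : ¬ permDist x0 z = k := by omega
      simp [hd0, hne]
    · push_neg at hex
      have heq : ∀ x ∈ C,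
          (m * (if permDist x z ≤ k-1 then 1 else 0) + if permDist x z = k then 1 else 0)
            = if permDist x z = k then 1 else 0 := by
        intro x hx
        have := hex x hx
        simp [this]
      rw [Finset.sum_congr rfl heq, ← Finset.card_filter]
      exact aux_sphere_count hk C hC z
  calc C.card * (m * V n (k-1) + n.choose k * numDerangements k)
      = ∑ _x ∈ C, (m * V n (k-1) + n.choose k * numDerangements k) := by
        rw [Finset.sum_const, smul_eq_mul]
    _ ≤ ∑ x ∈ C, (m * (Finset.univ.filter fun z => permDist x z ≤ k-1).card
          + (Finset.univ.filter fun z => permDist x z = k).card) :=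
        Finset.sum_le_sum fun x _ =>
          add_le_add (Nat.mul_le_mul_left m (aux_card_ball x)) (aux_card_sphere x)
    _ = ∑ x ∈ C, ∑ z ∈ (Finset.univ : Finset (Perm (Fin n))),
          (m * (if permDist x z ≤ k-1 then 1 else 0) + if permDist x z = k then 1 else 0) := by
        refine Finset.sum_congr rfl fun x _ => ?_
        rw [Finset.sum_add_distrib, ← Finset.mul_sum, ← Finset.card_filter, ← Finset.card_filter]
    _ = ∑ z ∈ (Finset.univ : Finset (Perm (Fin n))), ∑ x ∈ C,
          (m * (if permDist x z ≤ k-1 then 1 else 0) + if permDist x z = k then 1 else 0) :=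
        Finset.sum_comm
    _ ≤ ∑ _z ∈ (Finset.univ : Finset (Perm (Fin n))), m :=
        Finset.sum_le_sum fun z _ => hz z
    _ = Fintype.card (Perm (Fin n)) * m := by rw [Finset.sum_const, smul_eq_mul, Finset.card_univ]
    _ = m * n.factorial := by rw [Fintype.card_perm, Fintype.card_fin, mul_comm]

end Aux

theorem stmt12 (n k : ℕ) (hk : 2 ≤ k) (hkn : k ≤ n / 2) :
    (P n (2 * k) : ℚ) ≤ (Nat.factorial n : ℚ) /
      ((V n (k - 1) : ℚ) + (n.choose k : ℚ) * (numDerangements k : ℚ) / ((n / k : ℕ) : ℚ)) := by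
  have hk1 : 0 < k := by omega
  have h2k : 2 * k ≤ n := by
    have := (Nat.le_div_iff_mul_le (by norm_num : 0 < 2)).mp hkn
    omega
  have hm2 : 1 ≤ n / k := Nat.one_le_div_iff hk1 |>.mpr (by omega)
  obtain ⟨C, hC, hcard⟩ : ∃ C : Finset (Equiv.Perm (Fin n)), isPA C (2*k) ∧ C.card = P n (2*k) := by
    have h0 : ({m | ∃ C : Finset (Equiv.Perm (Fin n)), isPA C (2*k) ∧ C.card = m}).Nonempty :=
      ⟨0, ∅, fun x hx => absurd hx (Finset.notMem_empty x), rfl⟩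
    have hb : BddAbove {m | ∃ C : Finset (Equiv.Perm (Fin n)), isPA C (2*k) ∧ C.card = m} := by
      refine ⟨Fintype.card (Equiv.Perm (Fin n)), ?_⟩
      rintro mm ⟨C, -, rfl⟩
      exact Finset.card_le_univ C |>.trans_eq Finset.card_univ
    obtain ⟨C, hC1, hC2⟩ := Nat.sSup_mem h0 hb
    exact ⟨C, hC1, hC2⟩
  have hmain := aux_main hk1 C hC
  rw [hcard] at hmain
  have hV1 : 1 ≤ V n (k-1) := by
    unfold V
    calc 1 = n.choose 0 * numDerangements 0 := by simp
      _ ≤ _ := Finset.single_le_sum (f := fun i => n.choose i * numDerangements i)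
          (fun i _ => Nat.zero_le _) (Finset.mem_range.mpr (by omega))
  set m := n / k with hm
  have hm0 : (0:ℚ) < (m:ℚ) := by exact_mod_cast hm2
  have hdenom : (0:ℚ) < (V n (k - 1) : ℚ) + (n.choose k : ℚ) * (numDerangements k : ℚ) / (m:ℚ) := by
    have h1 : (1:ℚ) ≤ (V n (k-1) : ℚ) := by exact_mod_cast hV1
    have h2 : (0:ℚ) ≤ (n.choose k : ℚ) * (numDerangements k : ℚ) / (m:ℚ) := by positivity
    linarith
  rw [le_div_iff₀ hdenom]
  have key : (P n (2*k) : ℚ) * ((m:ℚ) * (V n (k-1) : ℚ) + (n.choose k : ℚ) * (numDerangements k : ℚ))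
      ≤ (m:ℚ) * (n.factorial : ℚ) := by exact_mod_cast hmain
  rw [← mul_le_mul_iff_of_pos_right hm0]
  have hexp : ((V n (k - 1) : ℚ) + (n.choose k : ℚ) * (numDerangements k : ℚ) / (m:ℚ)) * (m:ℚ)
      = (m:ℚ) * (V n (k-1) : ℚ) + (n.choose k : ℚ) * (numDerangements k : ℚ) := by
    rw [add_mul, div_mul_cancel₀ _ (ne_of_gt hm0), mul_comm]
  rw [mul_assoc, hexp]
  linarith [key]
end

section
/- For 2 ≤ k ≤ ⌊(n−k−1)/2⌋, P(n,2k+1) ≤ n! / ( V(n,k) + ( C(n,k+1)·D_{k+1} − A(n−k,2k,k+1)·C(n,k)·D_k ) / A(n,2k,k+1) ). -/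
open Finset

-- ### basic permDist lemmas

lemma permDist_comm {n : ℕ} (x y : Equiv.Perm (Fin n)) : permDist x y = permDist y x := by
  unfold permDist; congr 1; ext i; simp [ne_comm]

lemma permDist_triangle {n : ℕ} (x y z : Equiv.Perm (Fin n)) :
    permDist x z ≤ permDist x y + permDist y z := by
  unfold permDist
  refine le_trans (card_le_card ?_) (card_union_le _ _)
  intro i hi
  simp only [mem_filter, mem_univ, true_and, mem_union] at *
  by_contra h
  push_neg at h
  exact hi (h.1.symm ▸ h.2)

-- ### counting lemmas

lemma supp_count (n : ℕ) (s : Finset (Fin n)) :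
    (univ.filter fun w : Equiv.Perm (Fin n) => (univ.filter fun i => w i ≠ i) = s).card
      = numDerangements s.card := by
  rw [← Fintype.card_subtype]
  rw [← Fintype.card_coe s, ← card_derangements_eq_numDerangements ↥s]
  have e := derangements.subtypeEquiv (· ∈ s) (α := Fin n)
  rw [Fintype.card_congr e]
  apply Fintype.card_congr
  apply Equiv.subtypeEquivRight
  intro f
  constructor
  · intro h a
    simp only [Function.mem_fixedPoints, Function.IsFixedPt]
    constructor
    · intro ha
      by_contra hfa
      have : a ∈ s := by rw [← h]; simp [hfa]
      exact ha this
    · intro hfa ha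
      have : a ∈ (univ.filter fun i => f i ≠ i) := by rw [h]; exact ha
      simp at this; exact this hfa
  · intro h
    ext a
    simp only [mem_filter, mem_univ, true_and]
    have := h a
    simp only [Function.mem_fixedPoints, Function.IsFixedPt] at this
    tauto

lemma weight_count (n i : ℕ) :
    (univ.filter fun w : Equiv.Perm (Fin n) => permWeight w = i).card
      = n.choose i * numDerangements i := by
  have hset : (univ.filter fun w : Equiv.Perm (Fin n) => permWeight w = i)
      = (powersetCard i (univ : Finset (Fin n))).biUnion
          (fun s => univ.filter fun w => (univ.filter fun j => w j ≠ j) = s) := by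
    ext w
    simp only [mem_filter, mem_biUnion, mem_powersetCard, mem_univ, true_and]
    constructor
    · intro h
      exact ⟨_, ⟨subset_univ _, h⟩, rfl⟩
    · rintro ⟨s, ⟨-, hs⟩, rfl⟩
      exact hs
  rw [hset, card_biUnion]
  · rw [Finset.sum_congr rfl (fun s hs => ?_)]
    · rw [Finset.sum_const, card_powersetCard, card_univ, Fintype.card_fin, smul_eq_mul]
    · rw [supp_count, (mem_powersetCard.mp hs).2]
  · intro s hs t ht hst
    rw [Function.onFun, Finset.disjoint_left]
    intro w hw hw'
    simp only [mem_filter, mem_univ, true_and] at hw hw'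
    exact hst (hw ▸ hw')

lemma dist_count {n : ℕ} (x : Equiv.Perm (Fin n)) (i : ℕ) :
    (univ.filter fun z => permDist x z = i).card = n.choose i * numDerangements i := by
  rw [← weight_count n i]
  apply Finset.card_bij' (fun z _ => x⁻¹ * z) (fun w _ => x * w)
  · intro z hz
    simp only [mem_filter, mem_univ, true_and] at hz ⊢
    rw [← hz]
    unfold permDist permWeight
    congr 1
    ext j
    rw [Finset.mem_filter, Finset.mem_filter]
    simp only [mem_filter, mem_univ, true_and, Equiv.Perm.mul_apply, ne_eq]
    constructor
    · intro h h'
      exact h (by rw [← h']; simp)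
    · intro h h'
      apply h
      have := congrArg x h'
      simpa using this.symm
  · intro w hw
    simp only [mem_filter, mem_univ, true_and] at hw ⊢
    rw [← hw]
    unfold permDist permWeight
    congr 1
    ext j
    rw [Finset.mem_filter, Finset.mem_filter]
    simp only [mem_filter, mem_univ, true_and, Equiv.Perm.mul_apply, ne_eq]
    constructor
    · intro h h'
      exact h (congrArg x h'.symm)
    · intro h h'
      exact h (x.injective h').symm
  · intro z _; group
  · intro w _; group

lemma ball_count (n k : ℕ) (x : Equiv.Perm (Fin n)) :
    (univ.filter fun z => permDist x z ≤ k).card = V n k := by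
  rw [V, Finset.card_eq_sum_card_fiberwise
      (f := fun z => permDist x z) (t := Finset.range (k+1))
      (fun z hz => by simp only [mem_coe, mem_filter] at hz; simp [Nat.lt_succ_iff, hz.2])]
  refine Finset.sum_congr rfl (fun i hi => ?_)
  rw [Finset.filter_filter, ← dist_count x i]
  congr 1
  apply Finset.filter_congr
  intro z _
  simp only [mem_range, Nat.lt_succ_iff] at hi
  constructor
  · exact fun h => h.2
  · exact fun h => ⟨h ▸ hi, h⟩

-- ### A lemmas

lemma A_bddAbove (n d w : ℕ) : BddAbove {m | ∃ C : Finset (Finset (Fin n)),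
    (∀ s ∈ C, s.card = w) ∧ (∀ s ∈ C, ∀ t ∈ C, s ≠ t → d ≤ (symmDiff s t).card) ∧ C.card = m} := by
  refine ⟨Fintype.card (Finset (Fin n)), ?_⟩
  rintro m ⟨C, -, -, rfl⟩
  exact le_trans (card_le_univ C) (le_of_eq (card_univ))

lemma le_A {n d w : ℕ} (C : Finset (Finset (Fin n))) (h1 : ∀ s ∈ C, s.card = w)
    (h2 : ∀ s ∈ C, ∀ t ∈ C, s ≠ t → d ≤ (symmDiff s t).card) : C.card ≤ A n d w :=
  le_csSup (A_bddAbove n d w) ⟨C, h1, h2, rfl⟩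

lemma A_pos {n d w : ℕ} (h : w ≤ n) : 1 ≤ A n d w := by
  obtain ⟨s, -, hs⟩ := Finset.exists_subset_card_eq (s := (univ : Finset (Fin n))) (n := w)
    (by simpa using h)
  have := le_A (d := d) {s} (by simpa using hs) (by simp)
  simpa using this

lemma A_mono {m n : ℕ} (h : m ≤ n) (d w : ℕ) : A m d w ≤ A n d w := by
  refine csSup_le ⟨0, ⟨∅, by simp, by simp, rfl⟩⟩ ?_
  rintro b ⟨C, h1, h2, rfl⟩
  classical
  set f : Finset (Fin m) → Finset (Fin n) := fun s => s.map (Fin.castLEEmb h) with hf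
  have hemb : Function.Injective (Fin.castLEEmb h) := (Fin.castLEEmb h).injective
  have hfinj : Function.Injective f := fun s t hst => Finset.map_injective _ hst
  refine le_trans (le_of_eq (Finset.card_image_of_injective C hfinj).symm)
    (le_A (C.image f) ?_ ?_)
  · intro s hs
    obtain ⟨s', hs', rfl⟩ := Finset.mem_image.mp hs
    rw [hf]; simpa using h1 s' hs'
  · intro s hs t ht hst
    obtain ⟨s', hs', rfl⟩ := Finset.mem_image.mp hs
    obtain ⟨t', ht', rfl⟩ := Finset.mem_image.mp ht
    have hne : s' ≠ t' := fun e => hst (by rw [e])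
    have := h2 s' hs' t' ht' hne
    rw [hf]
    simp only [Finset.map_eq_image]
    rw [← Finset.image_symmDiff _ _ hemb, Finset.card_image_of_injective _ hemb]
    exact this

-- ### symmDiff card

lemma symmDiff_card_ge {α : Type*} [DecidableEq α] {s t : Finset α} {k : ℕ}
    (hs : s.card = k+1) (ht : t.card = k+1) (h : (s ∩ t).card ≤ 1) :
    2*k ≤ (symmDiff s t).card := by
  have h1 : symmDiff s t = (s ∪ t) \ (s ∩ t) := by
    rw [symmDiff_eq_sup_sdiff_inf, sup_eq_union, inf_eq_inter]
  have h2 := card_union_add_card_inter s t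
  have h3 : (s ∩ t) ⊆ (s ∪ t) := (inter_subset_left).trans subset_union_left
  rw [h1, card_sdiff_of_subset h3]
  omega

-- ### transfer map to Fin (n-k)

lemma exists_phi (n k : ℕ) (t : Finset (Fin n)) (ht : t.card = k) :
    ∃ φ : Finset (Fin n) → Finset (Fin (n-k)),
      (∀ s, s ⊆ (univ : Finset (Fin n)) \ t → (φ s).card = s.card) ∧
      (∀ s s', φ (symmDiff s s') = symmDiff (φ s) (φ s')) := by
  classical
  set u := (univ : Finset (Fin n)) \ t with hu
  have hucard : u.card = n - k := by
    rw [hu, card_sdiff_of_subset (subset_univ t), card_univ, Fintype.card_fin, ht]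
  set e := u.orderIsoOfFin hucard with he
  refine ⟨fun s => univ.filter (fun j => ((e j : ↥u) : Fin n) ∈ s), ?_, ?_⟩
  · intro s hs
    apply Finset.card_bij (fun j _ => ((e j : ↥u) : Fin n))
    · intro j hj; exact (mem_filter.mp hj).2
    · intro j hj j' hj' hjj'
      exact e.injective (Subtype.coe_injective hjj')
    · intro b hb
      have hbu : b ∈ u := hs hb
      refine ⟨e.symm ⟨b, hbu⟩, ?_, ?_⟩
      · simp only [mem_filter, mem_univ, true_and]
        rw [OrderIso.apply_symm_apply]
        exact hb
      · rw [OrderIso.apply_symm_apply]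
  · intro s s'
    ext j
    simp [Finset.mem_symmDiff]

-- ### main counting lemma

lemma main_count (n k : ℕ) (hk : 2 ≤ k) (hn : 3*k+1 ≤ n)
    (C : Finset (Equiv.Perm (Fin n))) (hC : isPA C (2*k+1)) :
    C.card * (n.choose (k+1) * numDerangements (k+1))
      + A n (2*k) (k+1) * (C.card * V n k)
    ≤ A n (2*k) (k+1) * n.factorial
      + A (n-k) (2*k) (k+1) * (C.card * (n.choose k * numDerangements k)) := by
  classical
  set a := A n (2*k) (k+1) with ha
  set a' := A (n-k) (2*k) (k+1) with ha'
  set g : Equiv.Perm (Fin n) → Equiv.Perm (Fin n) → Finset (Fin n) :=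
    fun z x => univ.filter (fun i => x i ≠ z i) with hg
  have hgcard : ∀ z x, (g z x).card = permDist x z := fun z x => rfl
  -- distance is at most the size of the union of supports
  have hunion : ∀ (z x y : Equiv.Perm (Fin n)), permDist x y ≤ (g z x ∪ g z y).card := by
    intro z x y
    apply card_le_card
    intro i hi
    simp only [hg, mem_filter, mem_univ, true_and, mem_union, permDist] at *
    by_contra hcon
    push_neg at hcon
    exact hi (hcon.1.trans hcon.2.symm)
  -- supports of two codewords on the sphere of radius k+1 around z intersect in ≤ 1 point
  have hinter : ∀ (z : Equiv.Perm (Fin n)), ∀ x ∈ C, ∀ y ∈ C, x ≠ y →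
      permDist x z = k+1 → permDist y z = k+1 → (g z x ∩ g z y).card ≤ 1 := by
    intro z x hx y hy hxy hdx hdy
    have h1 := hC x hx y hy hxy
    have h2 := hunion z x y
    have h3 := card_union_add_card_inter (g z x) (g z y)
    have cx : (g z x).card = k+1 := by rw [hgcard, hdx]
    have cy : (g z y).card = k+1 := by rw [hgcard, hdy]
    omega
  -- if z is within distance k of codeword x0, then any codeword at distance k+1 from z
  -- has support disjoint from that of x0, and the distance is exactly k
  have hkey : ∀ (z x0 x : Equiv.Perm (Fin n)), x0 ∈ C → x ∈ C → permDist x0 z ≤ k →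
      permDist x z = k+1 → permDist x0 z = k ∧ g z x ⊆ univ \ (g z x0) := by
    intro z x0 x h0 hx hd0 hdx
    have hne : x0 ≠ x := fun e => by rw [e, hdx] at hd0; omega
    have h1 := hC x0 h0 x hx hne
    have h2 := hunion z x0 x
    have h3 := card_union_add_card_inter (g z x0) (g z x)
    have c0 : (g z x0).card = permDist x0 z := hgcard z x0
    have cx : (g z x).card = k+1 := by rw [hgcard, hdx]
    have hint0 : (g z x0 ∩ g z x).card = 0 := by omega
    refine ⟨by omega, ?_⟩
    intro i hi
    rw [mem_sdiff]
    refine ⟨mem_univ i, fun hi0 => ?_⟩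
    have : i ∈ g z x0 ∩ g z x := mem_inter.mpr ⟨hi0, hi⟩
    rw [card_eq_zero.mp hint0] at this
    exact absurd this (notMem_empty i)
  -- the per-point codeword sets
  set B : Equiv.Perm (Fin n) → Finset (Equiv.Perm (Fin n)) :=
    fun z => C.filter (fun x => permDist x z ≤ k) with hB
  set S : Equiv.Perm (Fin n) → Finset (Equiv.Perm (Fin n)) :=
    fun z => C.filter (fun x => permDist x z = k+1) with hS
  have hB1 : ∀ z, (B z).card ≤ 1 := by
    intro z
    rw [card_le_one]
    intro x hx y hy
    by_contra hxy
    have h1 := hC x (mem_of_mem_filter x hx) y (mem_of_mem_filter y hy) hxy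
    have h2 := permDist_triangle x z y
    have h3 := (mem_filter.mp hx).2
    have h4 := (mem_filter.mp hy).2
    rw [permDist_comm y z] at h4
    omega
  -- sums
  have hsumB : ∑ z : Equiv.Perm (Fin n), (B z).card = C.card * V n k := by
    have : ∀ z, (B z).card = ∑ x ∈ C, if permDist x z ≤ k then 1 else 0 := by
      intro z; rw [hB]; exact card_filter _ _
    rw [Finset.sum_congr rfl (fun z _ => this z), Finset.sum_comm]
    rw [Finset.sum_congr rfl (fun x _ => ?_)]
    · rw [Finset.sum_const, smul_eq_mul, mul_comm _ (V n k), mul_comm (V n k) _]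
    · rw [← card_filter, ball_count n k x]
  have hsumS : ∑ z : Equiv.Perm (Fin n), (S z).card
      = C.card * (n.choose (k+1) * numDerangements (k+1)) := by
    have : ∀ z, (S z).card = ∑ x ∈ C, if permDist x z = k+1 then 1 else 0 := by
      intro z; rw [hS]; exact card_filter _ _
    rw [Finset.sum_congr rfl (fun z _ => this z), Finset.sum_comm]
    rw [Finset.sum_congr rfl (fun x _ => ?_)]
    · rw [Finset.sum_const, smul_eq_mul]
    · rw [← card_filter, dist_count x (k+1)]
  -- bound on sphere codewords
  have hSa : ∀ z, (S z).card ≤ a := by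
    intro z
    have hinj : Set.InjOn (g z) (S z) := by
      intro x hx y hy hgxy
      by_contra hne
      have h := hinter z x (mem_of_mem_filter x (Finset.mem_coe.mp hx))
        y (mem_of_mem_filter y (Finset.mem_coe.mp hy)) hne
        (mem_filter.mp (Finset.mem_coe.mp hx)).2 (mem_filter.mp (Finset.mem_coe.mp hy)).2
      rw [hgxy, inter_self] at h
      have := hgcard z y
      rw [(mem_filter.mp (Finset.mem_coe.mp hy)).2] at this
      omega
    rw [← Finset.card_image_of_injOn hinj]
    apply le_A
    · intro s hs
      obtain ⟨x, hx, rfl⟩ := Finset.mem_image.mp hs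
      rw [hgcard, (mem_filter.mp hx).2]
    · intro s hs t ht hst
      obtain ⟨x, hx, rfl⟩ := Finset.mem_image.mp hs
      obtain ⟨y, hy, rfl⟩ := Finset.mem_image.mp ht
      have hne : x ≠ y := fun e => hst (by rw [e])
      have cx : (g z x).card = k+1 := by rw [hgcard, (mem_filter.mp hx).2]
      have cy : (g z y).card = k+1 := by rw [hgcard, (mem_filter.mp hy).2]
      exact symmDiff_card_ge cx cy
        (hinter z x (mem_of_mem_filter x hx) y (mem_of_mem_filter y hy) hne
          (mem_filter.mp hx).2 (mem_filter.mp hy).2)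
  -- refined bound when z is near a codeword
  have hSa' : ∀ z, (B z).Nonempty → (S z).card ≤ a' := by
    intro z ⟨x0, hx0⟩
    rcases (S z).eq_empty_or_nonempty with hSe | ⟨x1, hx1⟩
    · rw [hSe]; simp
    have hx0C := mem_of_mem_filter x0 hx0
    have hd0 := (mem_filter.mp hx0).2
    have hx1C := mem_of_mem_filter x1 hx1
    have hd1 := (mem_filter.mp hx1).2
    obtain ⟨hd0k, -⟩ := hkey z x0 x1 hx0C hx1C hd0 hd1
    have htcard : (g z x0).card = k := by rw [hgcard, hd0k]
    obtain ⟨φ, hφ1, hφ2⟩ := exists_phi n k (g z x0) htcard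
    have hsub : ∀ x ∈ S z, g z x ⊆ univ \ (g z x0) := by
      intro x hx
      exact (hkey z x0 x hx0C (mem_of_mem_filter x hx) hd0 (mem_filter.mp hx).2).2
    have hinj : Set.InjOn (fun x => φ (g z x)) (S z) := by
      intro x hx y hy hgxy
      simp only at hgxy
      by_contra hne
      have hgg : g z x = g z y := by
        have hΔ : symmDiff (g z x) (g z y) ⊆ univ \ (g z x0) := by
          intro i hi
          rcases Finset.mem_symmDiff.mp hi with ⟨h1, -⟩ | ⟨h1, -⟩
          · exact hsub x (Finset.mem_coe.mp hx) h1
          · exact hsub y (Finset.mem_coe.mp hy) h1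
        have : (symmDiff (g z x) (g z y)).card = 0 := by
          rw [← hφ1 _ hΔ, hφ2, hgxy, symmDiff_self]
          simp
        have h0 := card_eq_zero.mp this
        rw [← Finset.bot_eq_empty] at h0
        exact symmDiff_eq_bot.mp h0
      have h := hinter z x (mem_of_mem_filter x (Finset.mem_coe.mp hx))
        y (mem_of_mem_filter y (Finset.mem_coe.mp hy)) hne
        (mem_filter.mp (Finset.mem_coe.mp hx)).2 (mem_filter.mp (Finset.mem_coe.mp hy)).2
      rw [hgg, inter_self] at h
      have := hgcard z y
      rw [(mem_filter.mp (Finset.mem_coe.mp hy)).2] at this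
      omega
    rw [← Finset.card_image_of_injOn hinj]
    apply le_A
    · intro s hs
      obtain ⟨x, hx, rfl⟩ := Finset.mem_image.mp hs
      rw [hφ1 _ (hsub x hx), hgcard, (mem_filter.mp hx).2]
    · intro s hs t ht hst
      obtain ⟨x, hx, rfl⟩ := Finset.mem_image.mp hs
      obtain ⟨y, hy, rfl⟩ := Finset.mem_image.mp ht
      have hne : x ≠ y := fun e => hst (by rw [e])
      have hΔ : symmDiff (g z x) (g z y) ⊆ univ \ (g z x0) := by
        intro i hi
        rcases Finset.mem_symmDiff.mp hi with ⟨h1, -⟩ | ⟨h1, -⟩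
        · exact hsub x hx h1
        · exact hsub y hy h1
      have cx : (g z x).card = k+1 := by rw [hgcard, (mem_filter.mp hx).2]
      have cy : (g z y).card = k+1 := by rw [hgcard, (mem_filter.mp hy).2]
      have hint := hinter z x (mem_of_mem_filter x hx) y (mem_of_mem_filter y hy) hne
        (mem_filter.mp hx).2 (mem_filter.mp hy).2
      have hge := symmDiff_card_ge cx cy hint
      calc 2*k ≤ (symmDiff (g z x) (g z y)).card := hge
        _ = (φ (symmDiff (g z x) (g z y))).card := (hφ1 _ hΔ).symm
        _ = (symmDiff (φ (g z x)) (φ (g z y))).card := by rw [hφ2]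
  -- z that are near codeword and have a sphere codeword are at distance exactly k
  have hmark : ∀ z, (B z).Nonempty → (S z).Nonempty → ∃ x0 ∈ C, permDist x0 z = k := by
    intro z ⟨x0, hx0⟩ ⟨x1, hx1⟩
    exact ⟨x0, mem_of_mem_filter x0 hx0,
      (hkey z x0 x1 (mem_of_mem_filter x0 hx0) (mem_of_mem_filter x1 hx1)
        (mem_filter.mp hx0).2 (mem_filter.mp hx1).2).1⟩
  -- the three regions
  set T0 : Finset (Equiv.Perm (Fin n)) := univ.filter (fun z => (B z).Nonempty) with hT0
  set T1 : Finset (Equiv.Perm (Fin n)) :=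
    univ.filter (fun z => ¬(B z).Nonempty ∧ (S z).Nonempty) with hT1
  set T2 : Finset (Equiv.Perm (Fin n)) :=
    univ.filter (fun z => (B z).Nonempty ∧ (S z).Nonempty) with hT2
  have hT0card : T0.card = ∑ z : Equiv.Perm (Fin n), (B z).card := by
    rw [hT0, card_filter]
    refine Finset.sum_congr rfl (fun z _ => ?_)
    by_cases hz : (B z).Nonempty
    · rw [if_pos hz]
      have := card_pos.mpr hz
      have := hB1 z
      omega
    · rw [if_neg hz]
      rw [not_nonempty_iff_eq_empty] at hz
      rw [hz, card_empty]
  have hT2card : T2.card ≤ C.card * (n.choose k * numDerangements k) := by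
    have hsub : T2 ⊆ C.biUnion (fun x => univ.filter (fun z => permDist x z = k)) := by
      intro z hz
      obtain ⟨hz1, hz2⟩ := (mem_filter.mp hz).2
      obtain ⟨x0, hx0C, hx0d⟩ := hmark z hz1 hz2
      exact Finset.mem_biUnion.mpr ⟨x0, hx0C, mem_filter.mpr ⟨mem_univ z, hx0d⟩⟩
    refine le_trans (card_le_card hsub) (le_trans (card_biUnion_le) ?_)
    rw [Finset.sum_congr rfl (fun x _ => dist_count x k), Finset.sum_const, smul_eq_mul]
  have hsumS2 : ∑ z : Equiv.Perm (Fin n), (S z).card ≤ a * T1.card + a' * T2.card := by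
    have hpt : ∀ z : Equiv.Perm (Fin n), (S z).card ≤
        (if ¬(B z).Nonempty ∧ (S z).Nonempty then a else 0)
          + (if (B z).Nonempty ∧ (S z).Nonempty then a' else 0) := by
      intro z
      by_cases hSz : (S z).Nonempty
      · by_cases hBz : (B z).Nonempty
        · rw [if_neg (by tauto), if_pos ⟨hBz, hSz⟩]
          simpa using hSa' z hBz
        · rw [if_pos ⟨hBz, hSz⟩, if_neg (by tauto)]
          simpa using hSa z
      · rw [not_nonempty_iff_eq_empty] at hSz
        rw [hSz, card_empty]
        exact Nat.zero_le _
    refine le_trans (Finset.sum_le_sum (fun z _ => hpt z)) ?_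
    rw [Finset.sum_add_distrib]
    have e1 : ∑ z : Equiv.Perm (Fin n),
        (if ¬(B z).Nonempty ∧ (S z).Nonempty then a else 0) = a * T1.card := by
      rw [← Finset.sum_filter, Finset.sum_const, smul_eq_mul, mul_comm]
    have e2 : ∑ z : Equiv.Perm (Fin n),
        (if (B z).Nonempty ∧ (S z).Nonempty then a' else 0) = a' * T2.card := by
      rw [← Finset.sum_filter, Finset.sum_const, smul_eq_mul, mul_comm]
    rw [e1, e2]
  have hdisj : Disjoint T1 T0 := by
    rw [Finset.disjoint_left]
    intro z hz1 hz0
    exact ((mem_filter.mp hz1).2).1 ((mem_filter.mp hz0).2)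
  have hT10 : T1.card + T0.card ≤ n.factorial := by
    rw [← card_union_of_disjoint hdisj]
    refine le_trans (card_le_univ _) ?_
    simp [Fintype.card_perm]
  -- final arithmetic
  have e1 : C.card * (n.choose (k+1) * numDerangements (k+1))
      ≤ a * T1.card + a' * (C.card * (n.choose k * numDerangements k)) := by
    rw [← hsumS]
    exact le_trans hsumS2 (Nat.add_le_add_left (Nat.mul_le_mul_left a' hT2card) _)
  have e2 : C.card * V n k = T0.card := by rw [hT0card, hsumB]
  have e3 : a * T1.card + a * T0.card ≤ a * n.factorial := by
    rw [← Nat.mul_add]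
    exact Nat.mul_le_mul_left a hT10
  calc C.card * (n.choose (k+1) * numDerangements (k+1)) + a * (C.card * V n k)
      = C.card * (n.choose (k+1) * numDerangements (k+1)) + a * T0.card := by rw [e2]
    _ ≤ (a * T1.card + a' * (C.card * (n.choose k * numDerangements k))) + a * T0.card :=
        Nat.add_le_add_right e1 _
    _ = (a * T1.card + a * T0.card) + a' * (C.card * (n.choose k * numDerangements k)) := by
        ring
    _ ≤ a * n.factorial + a' * (C.card * (n.choose k * numDerangements k)) :=
        Nat.add_le_add_right e3 _

theorem stmt14 (n k : ℕ) (hk : 2 ≤ k) (hkn : k ≤ (n - k - 1) / 2) :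
    (P n (2 * k + 1) : ℚ) ≤ (Nat.factorial n : ℚ) /
      ((V n k : ℚ) +
        ((n.choose (k + 1) : ℚ) * (numDerangements (k + 1) : ℚ) -
          (A (n - k) (2 * k) (k + 1) : ℚ) * (n.choose k : ℚ) * (numDerangements k : ℚ)) /
        (A n (2 * k) (k + 1) : ℚ)) := by
  classical
  have hn : 3*k+1 ≤ n := by omega
  have hbdd : BddAbove {m | ∃ C : Finset (Equiv.Perm (Fin n)), isPA C (2*k+1) ∧ C.card = m} := by
    refine ⟨Fintype.card (Equiv.Perm (Fin n)), ?_⟩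
    rintro m ⟨C, -, rfl⟩
    exact le_trans (card_le_univ C) (le_of_eq card_univ)
  have hne : {m | ∃ C : Finset (Equiv.Perm (Fin n)), isPA C (2*k+1) ∧ C.card = m}.Nonempty :=
    ⟨0, ∅, fun x hx => absurd hx (notMem_empty x), rfl⟩
  have hmem := Nat.sSup_mem hne hbdd
  obtain ⟨C, hPA, hcard⟩ := hmem
  have hP : P n (2*k+1) = C.card := by rw [P, ← hcard]
  rw [hP]
  -- natural number inequality
  have key := main_count n k hk hn C hPA
  have ha1 : 1 ≤ A n (2*k) (k+1) := A_pos (by omega)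
  have ha'a : A (n-k) (2*k) (k+1) ≤ A n (2*k) (k+1) := A_mono (by omega) _ _
  have hV : n.choose k * numDerangements k + 1 ≤ V n k := by
    rw [V, Finset.sum_range_succ]
    have h1 : 1 ≤ ∑ i ∈ Finset.range k, n.choose i * numDerangements i := by
      have h0 := Finset.single_le_sum (f := fun i => n.choose i * numDerangements i)
        (fun i _ => Nat.zero_le _) (Finset.mem_range.mpr (show 0 < k by omega))
      simpa [numDerangements_zero] using h0
    omega
  -- move to ℚ
  set M : ℚ := (C.card : ℚ) with hM
  set aQ : ℚ := (A n (2*k) (k+1) : ℚ) with haQ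
  set aQ' : ℚ := (A (n-k) (2*k) (k+1) : ℚ) with haQ'
  set N1 : ℚ := (n.choose (k+1) : ℚ) * (numDerangements (k+1) : ℚ) with hN1
  set N0 : ℚ := (n.choose k : ℚ) * (numDerangements k : ℚ) with hN0
  set Vk : ℚ := (V n k : ℚ) with hVk
  set F : ℚ := (n.factorial : ℚ) with hF
  have keyQ : M * N1 + aQ * (M * Vk) ≤ aQ * F + aQ' * (M * N0) := by
    rw [hM, haQ, haQ', hN1, hN0, hVk, hF]
    push_cast
    exact_mod_cast key
  have haQ1 : (1:ℚ) ≤ aQ := by rw [haQ]; exact_mod_cast ha1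
  have haQpos : (0:ℚ) < aQ := lt_of_lt_of_le one_pos haQ1
  have ha'aQ : aQ' ≤ aQ := by rw [haQ, haQ']; exact_mod_cast ha'a
  have hVQ : N0 + 1 ≤ Vk := by rw [hN0, hVk]; exact_mod_cast hV
  have hN0nonneg : (0:ℚ) ≤ N0 := by rw [hN0]; positivity
  have hN1nonneg : (0:ℚ) ≤ N1 := by rw [hN1]; positivity
  have hMnonneg : (0:ℚ) ≤ M := by rw [hM]; positivity
  rw [show aQ' * (n.choose k : ℚ) * (numDerangements k : ℚ) = aQ' * N0 by rw [hN0]; ring]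
  have hden : (0:ℚ) < Vk + (N1 - aQ' * N0) / aQ := by
    have h2 : Vk + (N1 - aQ' * N0) / aQ = (aQ * Vk + N1 - aQ' * N0) / aQ := by
      field_simp
      ring
    rw [h2]
    apply div_pos ?_ haQpos
    nlinarith
  rw [le_div_iff₀ hden]
  rw [← mul_le_mul_iff_left₀ haQpos]
  have hexp : M * (Vk + (N1 - aQ' * N0) / aQ) * aQ
      = M * N1 + aQ * (M * Vk) - aQ' * (M * N0) := by
    field_simp
    ring
  rw [hexp]
  nlinarith [keyQ]
end

section
/- For d ≤ m < n, (n!/m!)·SP(m,d) ≥ min{ DV(n,d), SP(n,d) }, where DV(n,d) = n!/(d-1)! and SP(n,d) = n!/V(n,⌊(d-1)/2⌋). -/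
open Finset

theorem stmt16 (n m d : ℕ) (hdm : d ≤ m) (hmn : m < n) :
    min ((Nat.factorial n : ℚ) / (Nat.factorial (d - 1) : ℚ))
        ((Nat.factorial n : ℚ) / (V n ((d - 1) / 2) : ℚ))
      ≤ (Nat.factorial n : ℚ) / (Nat.factorial m : ℚ) *
        ((Nat.factorial m : ℚ) / (V m ((d - 1) / 2) : ℚ)) := by
  have hVpos : ∀ k r : ℕ, 0 < V k r := by
    intro k r
    have : 1 ≤ ∑ i ∈ Finset.range (r + 1), k.choose i * numDerangements i := by
      calc 1 = k.choose 0 * numDerangements 0 := by simp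
        _ ≤ _ := Finset.single_le_sum (f := fun i => k.choose i * numDerangements i)
              (fun i _ => Nat.zero_le _) (Finset.mem_range.mpr (Nat.succ_pos r))
    exact this
  have hmono : V m ((d - 1) / 2) ≤ V n ((d - 1) / 2) := by
    apply Finset.sum_le_sum
    intro i _
    exact Nat.mul_le_mul_right _ (Nat.choose_le_choose i (le_of_lt hmn))
  have hm : (Nat.factorial m : ℚ) ≠ 0 := by positivity
  have hrw : (Nat.factorial n : ℚ) / (Nat.factorial m : ℚ) *
      ((Nat.factorial m : ℚ) / (V m ((d - 1) / 2) : ℚ))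
      = (Nat.factorial n : ℚ) / (V m ((d - 1) / 2) : ℚ) := by
    field_simp
  rw [hrw]
  refine le_trans (min_le_right _ _) ?_
  apply div_le_div_of_nonneg_left (by positivity)
  · exact_mod_cast hVpos m _
  · exact_mod_cast hmono
end

section
/- For k ≥ 5 and 2k ≤ n, SP(n,2k) − ME(n,k) > 2(n−k+1)!/(n(k−1)), where SP(n,2k) = n!/V(n,k−1) and ME(n,k) = n!/( V(n,k−1) + C(n,k)·D_k/⌊n/k⌋ ). -/
open Finset

lemma derange_le_fact : ∀ m : ℕ, numDerangements m ≤ m.factorial ∧ numDerangements (m+1) ≤ (m+1).factorial := by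
  intro m
  induction m with
  | zero => simp [numDerangements_zero, numDerangements_one]
  | succ m ih =>
    refine ⟨ih.2, ?_⟩
    rw [numDerangements_add_two]
    calc (m + 1) * (numDerangements m + numDerangements (m + 1))
        ≤ (m + 1) * (m.factorial + (m+1).factorial) :=
          Nat.mul_le_mul_left _ (Nat.add_le_add ih.1 ih.2)
      _ = (m + 2).factorial := by
          rw [Nat.factorial_succ (m+1), Nat.factorial_succ m]; ring

lemma fact_le_3_derange : ∀ m : ℕ, (m+3).factorial ≤ 3 * numDerangements (m+3) ∧ (m+4).factorial ≤ 3 * numDerangements (m+4) := by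
  intro m
  induction m with
  | zero => decide
  | succ m ih =>
    refine ⟨ih.2, ?_⟩
    have h : m + 5 = (m + 3) + 2 := by ring
    rw [h, numDerangements_add_two]
    have h2 : (m + 3 + 2).factorial = (m+4) * ((m+3).factorial + (m+4).factorial) := by
      rw [Nat.factorial_succ (m+3+1), Nat.factorial_succ (m+3)]
      ring_nf
    rw [h2]
    calc (m+4) * ((m+3).factorial + (m+4).factorial)
        ≤ (m+4) * (3 * numDerangements (m+3) + 3 * numDerangements (m+4)) :=
          Nat.mul_le_mul_left _ (Nat.add_le_add ih.1 ih.2)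
      _ = 3 * ((m + 3 + 1) * (numDerangements (m+3) + numDerangements (m+3+1))) := by ring_nf

lemma sum_desc_le (n : ℕ) : ∀ r : ℕ, r + 1 ≤ n → ∑ i ∈ Finset.range (r+1), n.descFactorial i ≤ 2 * n.descFactorial r := by
  intro r
  induction r with
  | zero => simp
  | succ r ih =>
    intro h
    rw [Finset.sum_range_succ]
    have h1 : r + 1 ≤ n := by omega
    have h2 := ih h1
    have h3 : 2 * n.descFactorial r ≤ n.descFactorial (r+1) := by
      rw [Nat.descFactorial_succ]
      exact Nat.mul_le_mul_right _ (by omega)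
    omega

lemma V_le_desc (n r : ℕ) (h : r + 1 ≤ n) : V n r ≤ 2 * n.descFactorial r := by
  calc V n r ≤ ∑ i ∈ Finset.range (r+1), n.descFactorial i := by
        apply Finset.sum_le_sum
        intro i _
        rw [Nat.descFactorial_eq_factorial_mul_choose, mul_comm (i.factorial)]
        exact Nat.mul_le_mul_left _ (derange_le_fact i).1
    _ ≤ 2 * n.descFactorial r := sum_desc_le n r h

lemma one_le_V (n r : ℕ) : 1 ≤ V n r := by
  have h0 : (0:ℕ) ∈ Finset.range (r+1) := by simp
  have := Finset.single_le_sum (f := fun i => n.choose i * numDerangements i)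
    (fun i _ => Nat.zero_le _) h0
  simpa [V, numDerangements_zero] using this

set_option maxHeartbeats 1000000 in
theorem stmt17 (n k : ℕ) (hk : 5 ≤ k) (hkn : 2 * k ≤ n) :
    (2 * Nat.factorial (n - k + 1) : ℚ) / ((n : ℚ) * ((k : ℚ) - 1)) <
      (Nat.factorial n : ℚ) / (V n (k - 1) : ℚ) -
      (Nat.factorial n : ℚ) /
        ((V n (k - 1) : ℚ) + (n.choose k : ℚ) * (numDerangements k : ℚ) / ((n / k : ℕ) : ℚ)) := by
  have hkn' : k ≤ n := by omega
  have hk1 : k - 1 + 1 = k := by omega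
  -- basic ℚ facts
  have hk5 : (5:ℚ) ≤ (k:ℚ) := by exact_mod_cast hk
  have hn10 : (10:ℚ) ≤ (n:ℚ) := by exact_mod_cast (by omega : 10 ≤ n)
  have hnk : 2*(k:ℚ) ≤ (n:ℚ) := by exact_mod_cast hkn
  set v : ℚ := (V n (k-1) : ℚ) with hv
  set f : ℚ := (n.descFactorial (k-1) : ℚ) with hf
  set g : ℚ := ((n-k+1).factorial : ℚ) with hgdef
  set q : ℕ := n / k with hq
  set b : ℚ := (n.choose k : ℚ) * (numDerangements k : ℚ) / (q : ℚ) with hb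
  have hvpos : 0 < v := by
    have := one_le_V n (k-1)
    rw [hv]; exact_mod_cast this
  have hfpos : 0 < f := by
    rw [hf]
    have : 0 < n.descFactorial (k-1) := by
      rw [Nat.pos_iff_ne_zero]
      intro h
      rw [Nat.descFactorial_eq_zero_iff_lt] at h
      omega
    exact_mod_cast this
  have hgpos : 0 < g := by rw [hgdef]; exact_mod_cast Nat.factorial_pos _
  have hq2 : 2 ≤ q := by
    rw [hq, Nat.le_div_iff_mul_le (by omega : 0 < k)]
    omega
  have hqk : q * k ≤ n := Nat.div_mul_le_self n k
  -- derangement bounds for k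
  have hDk : k.factorial ≤ 3 * numDerangements k := by
    obtain ⟨m, rfl⟩ : ∃ m, k = m + 3 := ⟨k - 3, by omega⟩
    exact (fact_le_3_derange m).1
  have hDkpos : 0 < numDerangements k := by
    have := Nat.factorial_pos k
    omega
  have hbpos : 0 < b := by
    rw [hb]
    apply div_pos
    · apply mul_pos
      · exact_mod_cast Nat.choose_pos hkn'
      · exact_mod_cast hDkpos
    · exact_mod_cast (by omega : 0 < q)
  -- v ≤ 2f
  have hv2f : v ≤ 2 * f := by
    rw [hv, hf]
    have := V_le_desc n (k-1) (by omega)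
    exact_mod_cast this
  -- n! = f * g
  have hfact : (n.factorial : ℚ) = f * g := by
    rw [hf, hgdef]
    have h1 : n - (k-1) = n - k + 1 := by omega
    have := Nat.factorial_mul_descFactorial (n := n) (k := k-1) (by omega)
    rw [h1] at this
    exact_mod_cast (by rw [← this]; ring)
  -- key bound: k*t*f ≤ 3*n*b, where t = n-k+1
  set t : ℚ := (n:ℚ) - (k:ℚ) + 1 with htdef
  have ht : ((n-k+1 : ℕ) : ℚ) = t := by
    rw [htdef]; push_cast [Nat.cast_sub hkn']; ring
  have hCDnat : (n - k + 1) * n.descFactorial (k-1) ≤ 3 * (n.choose k * numDerangements k) := by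
    have h1 : n.descFactorial k = (n - k + 1) * n.descFactorial (k-1) := by
      conv_lhs => rw [← hk1]
      rw [Nat.descFactorial_succ]
      congr 1
      omega
    have h2 : n.descFactorial k = k.factorial * n.choose k := Nat.descFactorial_eq_factorial_mul_choose n k
    calc (n - k + 1) * n.descFactorial (k-1) = k.factorial * n.choose k := by rw [← h1, h2]
      _ ≤ (3 * numDerangements k) * n.choose k := Nat.mul_le_mul_right _ hDk
      _ = 3 * (n.choose k * numDerangements k) := by ring
  have hkey : (k:ℚ) * t * f ≤ 3 * (n:ℚ) * b := by
    have hqb : (q:ℚ) * b = (n.choose k : ℚ) * (numDerangements k : ℚ) := by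
      rw [hb]
      field_simp
    have h1 : t * f ≤ 3 * ((n.choose k : ℚ) * (numDerangements k : ℚ)) := by
      rw [← ht, hf]
      exact_mod_cast hCDnat
    have h2 : (k:ℚ) * (t * f) ≤ (k:ℚ) * (3 * ((q:ℚ) * b)) := by
      rw [hqb]
      apply mul_le_mul_of_nonneg_left h1 (by positivity)
    have h3' : k * q ≤ n := by rw [mul_comm]; exact hqk
    have h3 : (k:ℚ) * (q:ℚ) ≤ (n:ℚ) := by exact_mod_cast h3'
    calc (k:ℚ) * t * f = (k:ℚ) * (t*f) := by ring
      _ ≤ (k:ℚ) * (3 * ((q:ℚ) * b)) := h2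
      _ = ((k:ℚ) * (q:ℚ)) * (3 * b) := by ring
      _ ≤ (n:ℚ) * (3*b) := by
          apply mul_le_mul_of_nonneg_right h3 (by positivity)
      _ = 3 * (n:ℚ) * b := by ring
  -- main polynomial inequality
  clear_value v f g b
  clear hv hf hgdef hb hq hqk hq2 hDk hDkpos hCDnat hkn hk hkn'
  have hktpos : (0:ℚ) < (k:ℚ) * t := by
    have : (6:ℚ) ≤ t := by rw [htdef]; linarith
    nlinarith
  have hA : v * (v + b) ≤ 4*f*f + 2*f*b := by nlinarith
  have h1 : 8*f*f*((k:ℚ)*t) ≤ 24*((n:ℚ)*b)*f := by nlinarith [mul_le_mul_of_nonneg_left hkey (le_of_lt (by positivity : (0:ℚ) < 8*f))]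
  have h2 : 24*(n:ℚ) + 4*((k:ℚ)*t) < ((n:ℚ)*((k:ℚ)-1))*((k:ℚ)*t) := by
    have ht6 : (6:ℚ) ≤ t := by rw [htdef]; linarith
    have hkt30 : (30:ℚ) ≤ (k:ℚ) * t := by nlinarith
    have h5 : (4:ℚ)*(n:ℚ) - 4 ≤ (n:ℚ)*((k:ℚ)-1) - 4 := by nlinarith
    nlinarith [mul_le_mul hkt30 h5 (by linarith : (0:ℚ) ≤ 4*(n:ℚ)-4) (by linarith : (0:ℚ) ≤ (k:ℚ)*t)]
  have key : 2 * (v*(v+b)) < f*b*((n:ℚ)*((k:ℚ)-1)) := by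
    have main2 : (2*(v*(v+b)))*((k:ℚ)*t) < (f*b*((n:ℚ)*((k:ℚ)-1)))*((k:ℚ)*t) := by
      calc (2*(v*(v+b)))*((k:ℚ)*t) ≤ (8*f*f + 4*f*b)*((k:ℚ)*t) := by nlinarith
        _ ≤ 24*((n:ℚ)*b)*f + 4*f*b*((k:ℚ)*t) := by nlinarith
        _ = f*b*(24*(n:ℚ) + 4*((k:ℚ)*t)) := by ring
        _ < f*b*(((n:ℚ)*((k:ℚ)-1))*((k:ℚ)*t)) := by
            exact mul_lt_mul_of_pos_left h2 (mul_pos hfpos hbpos)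
        _ = (f*b*((n:ℚ)*((k:ℚ)-1)))*((k:ℚ)*t) := by ring
    exact lt_of_mul_lt_mul_right main2 (le_of_lt hktpos)
  -- assemble
  have hvbpos : 0 < v + b := by linarith
  have hden : (0:ℚ) < (n:ℚ) * ((k:ℚ) - 1) := by nlinarith
  rw [div_sub_div _ _ (ne_of_gt hvpos) (ne_of_gt hvbpos), div_lt_div_iff₀ hden (mul_pos hvpos hvbpos)]
  rw [hfact]
  nlinarith [mul_lt_mul_of_pos_left key hgpos]
end

section
/- For k ≥ 5, V(n,k) ≤ k·C(n,k)·D_k, where V(n,k) = Σ_{i=0}^{k} C(n,i)·D_i and D_i is the number of derangements of order i (assuming k ≤ n). -/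
open Finset

lemma fg (n : ℕ) :
    (∑ i ∈ Finset.range (n+1), (n.choose i * numDerangements i : ℤ)) = n.factorial ∧
    (∑ i ∈ Finset.range (n+1), (n.choose i * numDerangements (i+1) : ℤ)) = n * n.factorial := by
  induction n with
  | zero => simp [numDerangements_one]
  | succ n ih =>
    obtain ⟨hf, hg⟩ := ih
    have hf1 : (∑ i ∈ Finset.range (n+2), ((n+1).choose i * numDerangements i : ℤ))
        = (n+1).factorial := by
      rw [Finset.sum_range_succ' _ (n+1)]
      have : ∀ k ∈ Finset.range (n+1), ((n+1).choose (k+1) * numDerangements (k+1) : ℤ)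
          = (n.choose k * numDerangements (k+1) : ℤ) + (n.choose (k+1) * numDerangements (k+1) : ℤ) := by
        intro k _
        rw [Nat.choose_succ_succ]
        push_cast
        ring
      rw [Finset.sum_congr rfl this, Finset.sum_add_distrib]
      have h2 : (∑ i ∈ Finset.range (n+1), (n.choose (i+1) * numDerangements (i+1) : ℤ))
          = n.factorial - 1 := by
        have e1 : (∑ i ∈ Finset.range (n+2), (n.choose i * numDerangements i : ℤ))
            = (∑ i ∈ Finset.range (n+1), (n.choose (i+1) * numDerangements (i+1) : ℤ))
              + n.choose 0 * numDerangements 0 := Finset.sum_range_succ' _ (n+1)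
        have e2 : (∑ i ∈ Finset.range (n+2), (n.choose i * numDerangements i : ℤ))
            = (∑ i ∈ Finset.range (n+1), (n.choose i * numDerangements i : ℤ))
              + n.choose (n+1) * numDerangements (n+1) := Finset.sum_range_succ _ (n+1)
        rw [hf] at e2
        rw [e2, Nat.choose_succ_self] at e1
        simp only [Nat.cast_zero, zero_mul, add_zero, Nat.choose_zero_right,
          numDerangements_zero, Nat.cast_one, one_mul, mul_one] at e1
        linarith [e1]
      rw [h2, hg]
      simp only [Nat.choose_zero_right, numDerangements_zero, Nat.cast_one, one_mul, mul_one]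
      push_cast [Nat.factorial_succ]
      ring
    refine ⟨hf1, ?_⟩
    have hD : ∀ i, (numDerangements (i+1) : ℤ) = (i+1) * numDerangements i - (-1)^i :=
      numDerangements_succ
    have step : (∑ i ∈ Finset.range (n+2), ((n+1).choose i * numDerangements (i+1) : ℤ))
        = ∑ i ∈ Finset.range (n+2), ((i+1) * ((n+1).choose i * numDerangements i) : ℤ)
          - ∑ i ∈ Finset.range (n+2), ((-1)^i * (n+1).choose i : ℤ) := by
      rw [← Finset.sum_sub_distrib]
      refine Finset.sum_congr rfl fun i _ => ?_
      rw [hD i]; ring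
    rw [step, Int.alternating_sum_range_choose_of_ne (by omega), sub_zero]
    have split : (∑ i ∈ Finset.range (n+2), ((i+1) * ((n+1).choose i * numDerangements i) : ℤ))
        = ∑ i ∈ Finset.range (n+2), (i * ((n+1).choose i * numDerangements i) : ℤ)
          + ∑ i ∈ Finset.range (n+2), ((n+1).choose i * numDerangements i : ℤ) := by
      rw [← Finset.sum_add_distrib]
      exact Finset.sum_congr rfl fun i _ => by ring
    rw [split, hf1]
    have hmain : (∑ i ∈ Finset.range (n+2), (i * ((n+1).choose i * numDerangements i) : ℤ))
        = (n+1) * (n * n.factorial) := by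
      rw [Finset.sum_range_succ' ]
      simp only [Nat.cast_zero, zero_mul, mul_zero, add_zero]
      have : ∀ k ∈ Finset.range (n+1), ((k+1 : ℕ) * ((n+1).choose (k+1) * numDerangements (k+1)) : ℤ)
          = (n+1) * (n.choose k * numDerangements (k+1)) := by
        intro k _
        have h := Nat.add_one_mul_choose_eq n k
        have h' : ((n+1) * n.choose k : ℤ) = ((n+1).choose (k+1) * (k+1) : ℤ) := by
          exact_mod_cast congrArg (Nat.cast : ℕ → ℤ) h
        push_cast
        push_cast at h'
        nlinarith [h']
      rw [Finset.sum_congr rfl this, ← Finset.mul_sum, hg]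
    rw [hmain]
    push_cast [Nat.factorial_succ]
    ring

lemma sum_choose_mul_numDerangements (k : ℕ) :
    ∑ i ∈ Finset.range (k+1), k.choose i * numDerangements i = k.factorial := by
  have := (fg k).1
  exact_mod_cast this

lemma fact_le_der (k : ℕ) (hk : 3 ≤ k) : (k-1).factorial ≤ numDerangements k := by
  obtain ⟨m, rfl⟩ : ∃ m, k = m + 3 := ⟨k - 3, by omega⟩
  clear hk
  induction m with
  | zero => decide
  | succ m ih =>
    have : numDerangements (m+4) = (m+3) * (numDerangements (m+2) + numDerangements (m+3)) :=
      numDerangements_add_two (m+2)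
    have h2 : (m+3) * numDerangements (m+3) ≤ numDerangements (m+4) := by
      rw [this]; nlinarith [numDerangements (m+2)]
    calc (m+4-1).factorial = (m+3) * (m+3-1).factorial := by
          simp [Nat.factorial_succ]
      _ ≤ (m+3) * numDerangements (m+3) := Nat.mul_le_mul_left _ ih
      _ ≤ _ := h2

theorem stmt18 (n k : ℕ) (hk : 5 ≤ k) (hkn : k ≤ n) :
    V n k ≤ k * (n.choose k * numDerangements k) := by
  have step1 : V n k ≤ n.choose k * k.factorial := by
    rw [V, ← sum_choose_mul_numDerangements k, Finset.mul_sum]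
    refine Finset.sum_le_sum fun i hi => ?_
    have hik : i ≤ k := by simpa [Nat.lt_succ_iff] using Finset.mem_range.mp hi
    have h1 : n.choose i ≤ n.choose k * k.choose i := by
      rw [Nat.choose_mul hik]
      have : 0 < (n - i).choose (k - i) := Nat.choose_pos (by omega)
      nlinarith [Nat.choose_pos (le_trans hik hkn) (k := i) ]
    calc n.choose i * numDerangements i ≤ (n.choose k * k.choose i) * numDerangements i :=
          Nat.mul_le_mul_right _ h1
      _ = n.choose k * (k.choose i * numDerangements i) := by ring
  have step2 : k.factorial ≤ k * numDerangements k := by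
    have h := fact_le_der k (by omega)
    calc k.factorial = k * (k-1).factorial := by
          obtain ⟨m, rfl⟩ : ∃ m, k = m + 1 := ⟨k-1, by omega⟩
          simp [Nat.factorial_succ]
      _ ≤ k * numDerangements k := Nat.mul_le_mul_left _ h
  calc V n k ≤ n.choose k * k.factorial := step1
    _ ≤ n.choose k * (k * numDerangements k) := Nat.mul_le_mul_left _ step2
    _ = k * (n.choose k * numDerangements k) := by ring
end
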